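/- arXiv:2411.19540 — 4 statements merged into one kernel-verified Lean document; each statement's English description precedes it below -/
import Mathlib

section
/- Let A, B ⊆ ℝⁿ be arbitrary subsets and X₁,…,X_r : ℝⁿ → ℝⁿ arbitrary vector fields. If A ⊆ char(B) and A is open in B (in the subspace topology), then A = char(A). -/
/-- A vector `v` is C¹-Zariski tangent to a set `A ⊆ ℝⁿ` at `p` if every C¹ function
vanishing identically on `A` has derivative zero along `v` at `p`. -/
def ZariskiTangent {n : ℕ} (A : Set (Fin n → ℝ)) (p v : Fin n → ℝ) : Prop :=
  ∀ f : (Fin n → ℝ) → ℝ, ContDiff ℝ 1 f → (∀ x ∈ A, f x = 0) → fderiv ℝ f p v = 0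

/-- The set of characteristic points of `A` with respect to the vector fields `X j`. -/
def charSet {n r : ℕ} (X : Fin r → (Fin n → ℝ) → (Fin n → ℝ)) (A : Set (Fin n → ℝ)) :
    Set (Fin n → ℝ) :=
  {p ∈ A | ∀ j, ZariskiTangent A p (X j p)}

open Topology

/-- Cutting `f` off by a bump function supported in `U` and equal to `1` near `p` turns it into a
function vanishing on all of `B`, without changing its derivative at `p`. -/
theorem ZariskiTangent.inter_of_mem_nhds {n : ℕ} {B U : Set (Fin n → ℝ)} {p v : Fin n → ℝ}
    (h : ZariskiTangent B p v) (hU : U ∈ 𝓝 p) : ZariskiTangent (B ∩ U) p v := by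
  intro f hf hfBU
  obtain ⟨ε, hε, hball⟩ := Metric.mem_nhds_iff.1 hU
  let c : ContDiffBump p := ⟨ε / 2, ε, half_pos hε, half_lt_self hε⟩
  have hfc : ∀ x ∈ B, f x * c x = 0 := by
    intro x hxB
    by_cases hx : x ∈ Metric.ball p ε
    · rw [hfBU x ⟨hxB, hball hx⟩, zero_mul]
    · rw [c.zero_of_le_dist (not_lt.1 hx), mul_zero]
  have hloc : (fun x => f x * c x) =ᶠ[𝓝 p] f := by
    filter_upwards [c.eventuallyEq_one] with x hx
    rw [hx, Pi.one_apply, mul_one]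
  rw [← hloc.fderiv_eq]
  exact h _ (hf.mul c.contDiff) hfc

/-- if `A ⊆ char(B)` and `A` is open in `B` (subspace topology),
then `A = char(A)`.  No regularity of the vector fields is assumed. -/
theorem char_of_open_subset_char {n r : ℕ} (X : Fin r → (Fin n → ℝ) → (Fin n → ℝ))
    (A B : Set (Fin n → ℝ)) (hAB : A ⊆ charSet X B)
    (hopen : ∃ U : Set (Fin n → ℝ), IsOpen U ∧ A = B ∩ U) :
    A = charSet X A := by
  refine Set.Subset.antisymm (fun p hp => ⟨hp, fun j => ?_⟩) (Set.sep_subset _ _)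
  obtain ⟨U, hU, rfl⟩ := hopen
  exact ((hAB hp).2 j).inter_of_mem_nhds (hU.mem_nhds hp.2)
end

section
/- In an o-minimal structure, if A ⊆ ℝⁿ is definable with empty interior, then its topological closure also has empty interior. -/
/-- A structure on the ordered field of real numbers: a family of boolean algebras of
subsets of `ℝⁿ`, closed under products and coordinate projections, and containing all
semialgebraic sets (generated by polynomial equalities and inequalities). -/
structure RealStructure where
  defin : (n : ℕ) → Set (Set (Fin n → ℝ))
  empty_mem : ∀ n, ∅ ∈ defin n
  union_mem : ∀ {n : ℕ} {A B : Set (Fin n → ℝ)}, A ∈ defin n → B ∈ defin n → A ∪ B ∈ defin n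
  compl_mem : ∀ {n : ℕ} {A : Set (Fin n → ℝ)}, A ∈ defin n → Aᶜ ∈ defin n
  prod_mem : ∀ {n m : ℕ} {A : Set (Fin n → ℝ)} {B : Set (Fin m → ℝ)},
    A ∈ defin n → B ∈ defin m →
    {x : Fin (n + m) → ℝ | (fun i => x (Fin.castAdd m i)) ∈ A ∧
      (fun i => x (Fin.natAdd n i)) ∈ B} ∈ defin (n + m)
  proj_mem : ∀ {n : ℕ} {A : Set (Fin (n + 1) → ℝ)}, A ∈ defin (n + 1) →
    {x : Fin n → ℝ | ∃ t : ℝ, Fin.snoc x t ∈ A} ∈ defin n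
  polyEq_mem : ∀ {n : ℕ} (p : MvPolynomial (Fin n) ℝ),
    {x : Fin n → ℝ | MvPolynomial.eval x p = 0} ∈ defin n
  polyLt_mem : ∀ {n : ℕ} (p : MvPolynomial (Fin n) ℝ),
    {x : Fin n → ℝ | 0 < MvPolynomial.eval x p} ∈ defin n


/-- An o-minimal structure: a structure on the real field in which every definable
subset of `ℝ` is a finite union of points and open intervals (equivalently, has finite
frontier). -/
structure OMinimalStructure extends RealStructure where
  o_minimal : ∀ {A : Set (Fin 1 → ℝ)}, A ∈ defin 1 →
    (frontier {t : ℝ | (fun _ : Fin 1 => t) ∈ A}).Finite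

/-- A map `f : ℝⁿ → ℝᵐ` is definable if its graph is a definable subset of `ℝ^{n+m}`. -/
def DefinableFun (S : RealStructure) {n m : ℕ} (f : (Fin n → ℝ) → (Fin m → ℝ)) : Prop :=
  {z : Fin (n + m) → ℝ |
    (fun i => z (Fin.natAdd n i)) = f (fun i => z (Fin.castAdd m i))} ∈ S.defin (n + m)

namespace RealStructure
variable (S : RealStructure)

lemma univ_mem (k : ℕ) : (Set.univ : Set (Fin k → ℝ)) ∈ S.defin k := by
  have := S.compl_mem (S.empty_mem k)
  simpa using this

lemma inter_mem {k : ℕ} {A B : Set (Fin k → ℝ)} (hA : A ∈ S.defin k) (hB : B ∈ S.defin k) :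
    A ∩ B ∈ S.defin k := by
  have := S.compl_mem (S.union_mem (S.compl_mem hA) (S.compl_mem hB))
  simpa [Set.compl_union] using this

lemma iInter_mem {k r : ℕ} {f : Fin r → Set (Fin k → ℝ)} (hf : ∀ i, f i ∈ S.defin k) :
    (⋂ i, f i) ∈ S.defin k := by
  induction r with
  | zero => simpa using S.univ_mem k
  | succ r ih =>
      have h1 : (⋂ i : Fin r, f i.castSucc) ∈ S.defin k := ih (fun i => hf i.castSucc)
      have h2 := S.inter_mem h1 (hf (Fin.last r))
      have heq : (⋂ i, f i) = (⋂ i : Fin r, f i.castSucc) ∩ f (Fin.last r) := by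
        ext x
        simp only [Set.mem_iInter, Set.mem_inter_iff]
        constructor
        · exact fun h => ⟨fun i => h _, h _⟩
        · rintro ⟨h1, h2⟩ i
          induction i using Fin.lastCases with
          | last => exact h2
          | cast i => exact h1 i
      rwa [heq]

lemma coord_gt_mem {k : ℕ} (j : Fin k) (a : ℝ) : {z : Fin k → ℝ | a < z j} ∈ S.defin k := by
  have := S.polyLt_mem (MvPolynomial.X j - MvPolynomial.C a)
  simpa [sub_pos] using this

lemma coord_lt_mem {k : ℕ} (j : Fin k) (b : ℝ) : {z : Fin k → ℝ | z j < b} ∈ S.defin k := by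
  have := S.polyLt_mem (MvPolynomial.C b - MvPolynomial.X j)
  simpa [sub_pos] using this

lemma coord_eq_mem {k : ℕ} (j : Fin k) (a : ℝ) : {z : Fin k → ℝ | z j = a} ∈ S.defin k := by
  have := S.polyEq_mem (MvPolynomial.X j - MvPolynomial.C a)
  simpa [sub_eq_zero] using this

lemma coord_eq_coord_mem {k : ℕ} (i j : Fin k) :
    {z : Fin k → ℝ | z i = z j} ∈ S.defin k := by
  have := S.polyEq_mem (MvPolynomial.X i - MvPolynomial.X j (R := ℝ))
  simpa [sub_eq_zero] using this

end RealStructure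

namespace RealStructure
variable (S : RealStructure)

lemma proj_many_mem {k m : ℕ} {A : Set (Fin (k + m) → ℝ)} (hA : A ∈ S.defin (k + m)) :
    {x : Fin k → ℝ | ∃ z, z ∈ A ∧ ∀ j : Fin k, z (Fin.castAdd m j) = x j} ∈ S.defin k := by
  induction m with
  | zero =>
      have heq : {x : Fin k → ℝ | ∃ z, z ∈ A ∧ ∀ j : Fin k, z (Fin.castAdd 0 j) = x j} = A := by
        ext x
        constructor
        · rintro ⟨z, hz, h⟩
          have : z = x := funext fun j => h j
          rwa [this] at hz
        · intro hx
          exact ⟨x, hx, fun j => rfl⟩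
      rwa [heq]
  | succ m ih =>
      have h1 := S.proj_mem (n := k + m) hA
      have h2 := ih h1
      have heq : {x : Fin k → ℝ | ∃ z, z ∈ {w : Fin (k+m) → ℝ | ∃ t : ℝ, Fin.snoc w t ∈ A} ∧
            ∀ j : Fin k, z (Fin.castAdd m j) = x j}
          = {x : Fin k → ℝ | ∃ z, z ∈ A ∧ ∀ j : Fin k, z (Fin.castAdd (m+1) j) = x j} := by
        ext x
        constructor
        · rintro ⟨z, ⟨t, ht⟩, h⟩
          refine ⟨Fin.snoc z t, ht, fun j => ?_⟩
          have hc : Fin.castAdd (m+1) j = Fin.castSucc (Fin.castAdd m j) := by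
            apply Fin.ext; rfl
          rw [hc, Fin.snoc_castSucc]
          exact h j
        · rintro ⟨z, hz, h⟩
          have hzz : Fin.snoc (Fin.init z) (z (Fin.last (k+m))) = z := Fin.snoc_init_self z
          refine ⟨Fin.init z, ⟨z (Fin.last (k+m)), by rwa [hzz]⟩, fun j => ?_⟩
          have hc : Fin.castAdd (m+1) j = Fin.castSucc (Fin.castAdd m j) := by
            apply Fin.ext; rfl
          rw [← h j, hc]
          rfl
      rwa [heq] at h2

/-- The fiber of a definable set over a fixed point `x : ℝⁿ` is definable. -/
lemma fiber_mem {n : ℕ} (x : Fin n → ℝ) {A : Set (Fin (n+1) → ℝ)} (hA : A ∈ S.defin (n+1)) :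
    {y : Fin 1 → ℝ | Fin.snoc x (y 0) ∈ A} ∈ S.defin 1 := by
  -- big set in defin (1 + (n+1))
  have hP := S.prod_mem (S.univ_mem 1) hA
  -- equalities: coordinates of the (n+1)-part agree with x on first n coords
  have hE0 : (⋂ i : Fin n, {w : Fin (1 + (n+1)) → ℝ |
      w (Fin.natAdd 1 (Fin.castSucc i)) = x i}) ∈ S.defin (1 + (n+1)) :=
    S.iInter_mem (fun i => S.coord_eq_mem _ _)
  have hE1 : {w : Fin (1 + (n+1)) → ℝ |
      w (Fin.natAdd 1 (Fin.last n)) = w (Fin.castAdd (n+1) (0 : Fin 1))} ∈ S.defin (1 + (n+1)) :=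
    S.coord_eq_coord_mem _ _
  have hQ := S.inter_mem (S.inter_mem hP hE0) hE1
  have h2 := S.proj_many_mem (k := 1) (m := n+1) hQ
  have heq : {y : Fin 1 → ℝ | ∃ z, z ∈ ({w : Fin (1 + (n+1)) → ℝ |
          (fun i => w (Fin.castAdd (n+1) i)) ∈ (Set.univ : Set (Fin 1 → ℝ)) ∧
          (fun i => w (Fin.natAdd 1 i)) ∈ A} ∩
        ⋂ i : Fin n, {w | w (Fin.natAdd 1 (Fin.castSucc i)) = x i}) ∩
        {w | w (Fin.natAdd 1 (Fin.last n)) = w (Fin.castAdd (n+1) (0 : Fin 1))} ∧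
        ∀ j : Fin 1, z (Fin.castAdd (n+1) j) = y j}
      = {y : Fin 1 → ℝ | Fin.snoc x (y 0) ∈ A} := by
    ext y
    simp only [Set.mem_setOf_eq, Set.mem_inter_iff, Set.mem_iInter, Set.mem_univ, true_and]
    constructor
    · rintro ⟨z, ⟨⟨hzA, hzx⟩, hz1⟩, hzy⟩
      have hv : (fun i => z (Fin.natAdd 1 i)) = Fin.snoc x (y 0) := by
        funext i
        induction i using Fin.lastCases with
        | last => rw [Fin.snoc_last, hz1, hzy 0]
        | cast i => rw [Fin.snoc_castSucc, hzx i]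
      rwa [hv] at hzA
    · intro hy
      refine ⟨Fin.append y (Fin.snoc x (y 0)), ⟨⟨?_, ?_⟩, ?_⟩, ?_⟩
      · have : (fun i => Fin.append y (Fin.snoc x (y 0)) (Fin.natAdd 1 i)) = Fin.snoc x (y 0) := by
          funext i; rw [Fin.append_right]
        rwa [this]
      · intro i
        rw [Fin.append_right, Fin.snoc_castSucc]
      · rw [Fin.append_right, Fin.snoc_last, Fin.append_left]
      · intro j
        rw [Fin.append_left]
  rwa [heq] at h2

end RealStructure

/-- in an o-minimal structure, if a definable set `A ⊆ ℝⁿ` has empty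
interior, then its topological closure also has empty interior. -/
theorem closure_empty_interior (S : OMinimalStructure) {n : ℕ}
    (A : Set (Fin n → ℝ)) (hA : A ∈ S.defin n) (hint : interior A = ∅) :
    interior (closure A) = ∅ := by
  induction n with
  | zero =>
      rcases A.eq_empty_or_nonempty with h | h
      · simp [h]
      · exfalso
        have hAuniv : A = Set.univ := by
          obtain ⟨x, hx⟩ := h
          ext y
          simp only [Set.mem_univ, iff_true]
          have : y = x := Subsingleton.elim y x
          rwa [this]
        rw [hAuniv, interior_univ] at hint
        exact Set.univ_nonempty.ne_empty hint
  | succ n ih =>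
      by_contra hne
      rw [← Ne, ← Set.nonempty_iff_ne_empty] at hne
      obtain ⟨z₀, hz₀⟩ := hne
      obtain ⟨ε, hε, hball⟩ := Metric.isOpen_iff.1 isOpen_interior z₀ hz₀
      set a : Fin (n+1) → ℝ := fun i => z₀ i - ε with ha
      set b : Fin (n+1) → ℝ := fun i => z₀ i + ε with hb
      have hab : ∀ i, a i < b i := fun i => by simp [ha, hb]; linarith
      have hbox : ∀ z : Fin (n+1) → ℝ, (∀ i, z i ∈ Set.Ioo (a i) (b i)) → z ∈ closure A := by
        intro z hz
        apply interior_subset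
        apply hball
        rw [ball_pi _ hε]
        intro i _
        show z i ∈ Metric.ball (z₀ i) ε
        rw [Real.ball_eq_Ioo]
        exact hz i
      set c : ℝ := a (Fin.last n) with hc
      set d : ℝ := b (Fin.last n) with hd
      have hcd : c < d := hab _
      set Box : Set (Fin n → ℝ) :=
        Set.univ.pi (fun i => Set.Ioo (a i.castSucc) (b i.castSucc)) with hBox
      have hBoxOpen : IsOpen Box :=
        isOpen_set_pi Set.finite_univ (fun i _ => isOpen_Ioo)
      have hBoxNe : (fun i : Fin n => z₀ i.castSucc) ∈ Box := by
        intro i _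
        simp only [ha, hb, Set.mem_Ioo]
        constructor <;> linarith
      have hBoxMem : Box ∈ S.defin n := by
        have h1 : (⋂ i : Fin n, ({x : Fin n → ℝ | a i.castSucc < x i} ∩
            {x : Fin n → ℝ | x i < b i.castSucc})) ∈ S.defin n :=
          S.toRealStructure.iInter_mem
            (fun i => S.toRealStructure.inter_mem
              (S.toRealStructure.coord_gt_mem i (a i.castSucc))
              (S.toRealStructure.coord_lt_mem i (b i.castSucc)))
        have heq : Box = ⋂ i : Fin n, ({x : Fin n → ℝ | a i.castSucc < x i} ∩
            {x : Fin n → ℝ | x i < b i.castSucc}) := by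
          ext x
          simp [hBox, Set.mem_univ_pi, Set.mem_Ioo, Set.mem_iInter]
        rwa [heq]
      -- the widths
      set e : ℕ → ℝ := fun k => (d - c) / (k + 1) with he
      have hepos : ∀ k, 0 < e k := by
        intro k
        apply div_pos (by linarith) (by positivity)
      have hele : ∀ k, e k ≤ d - c := by
        intro k
        rw [he]
        apply div_le_of_le_mul₀ (by positivity) (by linarith)
        nlinarith [Nat.cast_nonneg (α := ℝ) k, hcd]
      -- the two families
      set Y : ℕ → Set (Fin n → ℝ) := fun k =>
        {x | ∀ t ∈ Set.Ioo c (c + e k), Fin.snoc x t ∈ A} with hY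
      set Z : ℕ → Set (Fin n → ℝ) := fun k =>
        Box ∩ {x | ∀ t ∈ Set.Ioo c (c + e k), Fin.snoc x t ∉ A} with hZ
      -- definability of bands
      have hBand : ∀ k, ({z : Fin (n+1) → ℝ | c < z (Fin.last n)} ∩
          {z : Fin (n+1) → ℝ | z (Fin.last n) < c + e k}) ∈ S.defin (n+1) := fun k =>
        S.toRealStructure.inter_mem
          (S.toRealStructure.coord_gt_mem _ _) (S.toRealStructure.coord_lt_mem _ _)
      have hYmem : ∀ k, Y k ∈ S.defin n := by
        intro k
        have h1 := S.toRealStructure.compl_mem (S.toRealStructure.proj_mem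
          (S.toRealStructure.inter_mem (S.toRealStructure.compl_mem hA) (hBand k)))
        have heq : Y k = {x : Fin n → ℝ | ∃ t : ℝ, Fin.snoc x t ∈
            (Aᶜ ∩ ({z : Fin (n+1) → ℝ | c < z (Fin.last n)} ∩
              {z : Fin (n+1) → ℝ | z (Fin.last n) < c + e k}))}ᶜ := by
          ext x
          simp only [hY, Set.mem_setOf_eq, Set.mem_compl_iff, Set.mem_inter_iff,
            Fin.snoc_last, Set.mem_Ioo]
          constructor
          · rintro h ⟨t, hc', h1', h2'⟩
            exact hc' (h t ⟨h1', h2'⟩)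
          · intro h t ht
            by_contra hcon
            exact h ⟨t, hcon, ht.1, ht.2⟩
        rwa [heq]
      have hZmem : ∀ k, Z k ∈ S.defin n := by
        intro k
        have h1 := S.toRealStructure.compl_mem (S.toRealStructure.proj_mem
          (S.toRealStructure.inter_mem hA (hBand k)))
        have heq : Z k = Box ∩ {x : Fin n → ℝ | ∃ t : ℝ, Fin.snoc x t ∈
            (A ∩ ({z : Fin (n+1) → ℝ | c < z (Fin.last n)} ∩
              {z : Fin (n+1) → ℝ | z (Fin.last n) < c + e k}))}ᶜ := by
          ext x
          simp only [hZ, Set.mem_inter_iff, Set.mem_setOf_eq, Set.mem_compl_iff,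
            Fin.snoc_last, Set.mem_Ioo, and_congr_right_iff]
          intro _
          constructor
          · rintro h ⟨t, hc', h1', h2'⟩
            exact h t ⟨h1', h2'⟩ hc'
          · intro h t ht hcon
            exact h ⟨t, hcon, ht.1, ht.2⟩
        rw [heq]
        exact S.toRealStructure.inter_mem hBoxMem h1
      -- openness of cylinder sets
      have hOpenW : ∀ (V : Set (Fin n → ℝ)), IsOpen V → ∀ k,
          IsOpen {z : Fin (n+1) → ℝ | Fin.init z ∈ V ∧
            z (Fin.last n) ∈ Set.Ioo c (c + e k)} := by
        intro V hV k
        have : {z : Fin (n+1) → ℝ | Fin.init z ∈ V ∧ z (Fin.last n) ∈ Set.Ioo c (c + e k)} =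
            (fun z : Fin (n+1) → ℝ => (Fin.init z, z (Fin.last n))) ⁻¹'
              (V ×ˢ Set.Ioo c (c + e k)) := rfl
        rw [this]
        apply IsOpen.preimage ?_ (hV.prod isOpen_Ioo)
        exact Continuous.prodMk (continuous_pi fun i => continuous_apply i.castSucc)
          (continuous_apply _)
      have hmid : ∀ k, c + e k / 2 ∈ Set.Ioo c (c + e k) := by
        intro k
        have := hepos k
        constructor <;> simp <;> linarith
      -- interiors of Y and Z are empty
      have hYint : ∀ k, interior (Y k) = ∅ := by
        intro k
        by_contra hcon
        rw [← Ne, ← Set.nonempty_iff_ne_empty] at hcon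
        obtain ⟨x₀, hx₀⟩ := hcon
        set W := {z : Fin (n+1) → ℝ | Fin.init z ∈ interior (Y k) ∧
          z (Fin.last n) ∈ Set.Ioo c (c + e k)} with hW
        have hWA : W ⊆ A := by
          rintro z ⟨h1, h2⟩
          have h3 : Fin.snoc (Fin.init z) (z (Fin.last n)) ∈ A :=
            (interior_subset h1) _ h2
          rwa [Fin.snoc_init_self] at h3
        have hWint : W ⊆ interior A :=
          interior_maximal hWA (hOpenW _ isOpen_interior k)
        rw [hint] at hWint
        have hmem : Fin.snoc x₀ (c + e k / 2) ∈ W := by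
          refine ⟨?_, ?_⟩
          · rwa [Fin.init_snoc]
          · rw [Fin.snoc_last]
            exact hmid k
        exact hWint hmem
      have hZint : ∀ k, interior (Z k) = ∅ := by
        intro k
        by_contra hcon
        rw [← Ne, ← Set.nonempty_iff_ne_empty] at hcon
        obtain ⟨x₀, hx₀⟩ := hcon
        set W := {z : Fin (n+1) → ℝ | Fin.init z ∈ interior (Z k) ∧
          z (Fin.last n) ∈ Set.Ioo c (c + e k)} with hW
        have hWcl : W ⊆ closure A := by
          rintro z ⟨h1, h2⟩
          have h3 : Fin.init z ∈ Z k := interior_subset h1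
          apply hbox
          intro i
          induction i using Fin.lastCases with
          | last =>
              refine ⟨h2.1, lt_of_lt_of_le h2.2 ?_⟩
              have h5 := hele k
              have h6 : d = b (Fin.last n) := hd
              linarith
          | cast i => exact h3.1 i (Set.mem_univ i)
        have hWdisj : ∀ z ∈ W, z ∉ A := by
          rintro z ⟨h1, h2⟩ hzA
          have h3 : Fin.init z ∈ Z k := interior_subset h1
          have h4 := h3.2 (z (Fin.last n)) h2
          rw [Fin.snoc_init_self] at h4
          exact h4 hzA
        set w : Fin (n+1) → ℝ := Fin.snoc x₀ (c + e k / 2) with hw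
        have hwW : w ∈ W := by
          constructor
          · rwa [hw, Fin.init_snoc]
          · rw [hw, Fin.snoc_last]
            exact hmid k
        obtain ⟨z, hzW, hzA⟩ := _root_.mem_closure_iff.1 (hWcl hwW) W
          (hOpenW _ isOpen_interior k) hwW
        exact hWdisj z hzW hzA
      -- covering of the box
      have hcover : ∀ x ∈ Box, ∃ k, x ∈ Y k ∪ Z k := by
        intro x hx
        have hfib := S.toRealStructure.fiber_mem x hA
        have hfin : (frontier {t : ℝ | Fin.snoc x t ∈ A}).Finite := S.o_minimal hfib
        set St := {t : ℝ | Fin.snoc x t ∈ A} with hSt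
        obtain ⟨e', he'mem, he'front⟩ :
            ∃ e', e' ∈ Set.Ioc c d ∧ Set.Ioo c e' ∩ frontier St = ∅ := by
          rcases (frontier St ∩ Set.Ioc c d).eq_empty_or_nonempty with h | h
          · refine ⟨d, ⟨hcd, le_refl d⟩, ?_⟩
            rw [Set.eq_empty_iff_forall_notMem]
            rintro t ⟨ht1, ht2⟩
            rw [Set.eq_empty_iff_forall_notMem] at h
            exact h t ⟨ht2, ht1.1, le_of_lt ht1.2⟩
          · obtain ⟨m, hm, hmin⟩ := Set.exists_min_image _ id (hfin.inter_of_left _) h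
            refine ⟨m, hm.2, ?_⟩
            rw [Set.eq_empty_iff_forall_notMem]
            rintro t ⟨ht1, ht2⟩
            have : m ≤ t := hmin t ⟨ht2, ht1.1, le_trans (le_of_lt ht1.2) hm.2.2⟩
            exact absurd ht1.2 (not_lt.2 this)
        have hsub : Set.Ioo c e' ⊆ St ∨ Set.Ioo c e' ⊆ Stᶜ := by
          have h1 : Set.Ioo c e' ⊆ interior St ∪ interior Stᶜ := by
            intro t ht
            have htf : t ∉ frontier St := fun hf => by
              rw [Set.eq_empty_iff_forall_notMem] at he'front
              exact he'front t ⟨ht, hf⟩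
            by_cases hcl : t ∈ closure St
            · left
              by_contra hti
              exact htf ⟨hcl, hti⟩
            · right
              rw [interior_compl]
              exact hcl
          have h2 := IsPreconnected.subset_or_subset isOpen_interior isOpen_interior
            (Disjoint.mono interior_subset interior_subset disjoint_compl_right)
            h1 isPreconnected_Ioo
          rcases h2 with h | h
          · exact Or.inl (h.trans interior_subset)
          · exact Or.inr (h.trans interior_subset)
        have he'c : 0 < e' - c := sub_pos.2 he'mem.1
        obtain ⟨k, hk⟩ := exists_nat_ge ((d - c) / (e' - c))
        have hek : e k ≤ e' - c := by
          rw [he]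
          rw [div_le_iff₀ he'c] at hk
          rw [div_le_iff₀ (by positivity)]
          nlinarith [he'c]
        have hIoosub : Set.Ioo c (c + e k) ⊆ Set.Ioo c e' := by
          apply Set.Ioo_subset_Ioo le_rfl
          linarith
        rcases hsub with h | h
        · exact ⟨k, Or.inl (fun t ht => (h (hIoosub ht) : _))⟩
        · exact ⟨k, Or.inr ⟨hx, fun t ht => (h (hIoosub ht) : _)⟩⟩
      -- Baire category argument
      have hdense : Dense (⋂ k : ℕ, (closure (Y k) ∪ closure (Z k))ᶜ) := by
        apply dense_iInter_of_isOpen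
        · intro k
          exact (isClosed_closure.union isClosed_closure).isOpen_compl
        · intro k
          rw [← interior_eq_empty_iff_dense_compl]
          rw [interior_union_isClosed_of_interior_empty isClosed_closure
            (ih _ (hZmem k) (hZint k))]
          exact ih _ (hYmem k) (hYint k)
      obtain ⟨y, hy, hyBox⟩ := hdense.exists_mem_open hBoxOpen ⟨_, hBoxNe⟩
      obtain ⟨k, hk⟩ := hcover y hyBox
      rw [Set.mem_iInter] at hy
      apply hy k
      rcases hk with h | h
      · exact Or.inl (subset_closure h)
      · exact Or.inr (subset_closure h)
end

section
/- (Generalized Weierstrass counterexample, scaling estimate) Let η be a smooth compactly supported function on ℝⁿ, s ≥ 1, and for t > 0 define η_t(x) = t^{s/2} η(t x₁,…,t x_s, x_{s+1},…,xₙ). Let X = Σ_{k=1}^n b_k(x) ∂_{x_k} be a smooth vector field such that b_k(0,…,0,x_{s+1},…,xₙ) = 0 for all k ≤ s. Then ∫_{ℝⁿ} |X η_t|² dx remains bounded as t → +∞, while ∫ |η_t|² dx = ∫ |η|² dx for all t. -/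
open MeasureTheory

/-- The anisotropic dilation scaling the first `s` coordinates by `t`. -/
def dilat {n : ℕ} (s : ℕ) (t : ℝ) (x : Fin n → ℝ) : Fin n → ℝ :=
  fun i => if (i : ℕ) < s then t * x i else x i

/-- The `L²`-normalized rescaling `η_t(x) = t^{s/2} η(t x₁, …, t x_s, x_{s+1}, …, x_n)`. -/
noncomputable def rescale {n : ℕ} (s : ℕ) (η : (Fin n → ℝ) → ℝ) (t : ℝ) :
    (Fin n → ℝ) → ℝ :=
  fun x => t ^ ((s : ℝ) / 2) * η (dilat s t x)

/-- The action of the vector field `X = Σ_k b_k ∂_{x_k}` on a function. -/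
noncomputable def applyVF {n : ℕ} (b : Fin n → (Fin n → ℝ) → ℝ)
    (f : (Fin n → ℝ) → ℝ) (x : Fin n → ℝ) : ℝ :=
  ∑ k : Fin n, b k x * fderiv ℝ f x (Pi.single k 1)

/-- The dilation as a linear map. -/
noncomputable def dilatL (n s : ℕ) (t : ℝ) : (Fin n → ℝ) →ₗ[ℝ] (Fin n → ℝ) :=
  Matrix.toLin' (Matrix.diagonal fun i : Fin n => if (i : ℕ) < s then t else 1)

lemma dilatL_apply {n : ℕ} (s : ℕ) (t : ℝ) (x : Fin n → ℝ) :
    dilatL n s t x = dilat s t x := by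
  ext i
  simp only [dilatL, Matrix.toLin'_apply, Matrix.mulVec_diagonal, dilat]
  split <;> simp

lemma card_filter_lt {n s : ℕ} (hsn : s ≤ n) :
    (Finset.univ.filter (fun i : Fin n => (i : ℕ) < s)).card = s := by
  have : Finset.univ.filter (fun i : Fin n => (i : ℕ) < s)
      = Finset.univ.map (Fin.castLEEmb hsn) := by
    ext a
    simp only [Finset.mem_filter, Finset.mem_univ, true_and, Finset.mem_map,
      Fin.castLEEmb_apply]
    constructor
    · intro ha
      exact ⟨⟨(a : ℕ), ha⟩, by ext; simp⟩
    · rintro ⟨b, rfl⟩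
      simpa using b.isLt
  rw [this, Finset.card_map, Finset.card_univ, Fintype.card_fin]

lemma det_dilatL {n s : ℕ} (hsn : s ≤ n) (t : ℝ) :
    LinearMap.det (dilatL n s t) = t ^ s := by
  rw [dilatL, LinearMap.det_toLin', Matrix.det_diagonal, Finset.prod_ite,
    Finset.prod_const, Finset.prod_const, one_pow, mul_one, card_filter_lt hsn]

lemma dilat_single {n : ℕ} (s : ℕ) (t : ℝ) (k : Fin n) :
    dilat s t (Pi.single k 1) = ((if (k : ℕ) < s then t else 1) : ℝ) • (Pi.single k 1 : Fin n → ℝ) := by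
  funext i
  rcases eq_or_ne i k with rfl | hik
  · simp only [dilat, Pi.smul_apply, Pi.single_eq_same, smul_eq_mul, mul_one]
  · simp [dilat, Pi.single_eq_of_ne hik]

lemma fderiv_rescale {n : ℕ} (s : ℕ) (η : (Fin n → ℝ) → ℝ) (hη : ContDiff ℝ (⊤ : ℕ∞) η)
    (t : ℝ) (x : Fin n → ℝ) :
    fderiv ℝ (rescale s η t) x
      = t ^ ((s : ℝ) / 2) •
        ((fderiv ℝ η (dilat s t x)).comp
          (LinearMap.toContinuousLinearMap (dilatL n s t))) := by
  set L := LinearMap.toContinuousLinearMap (dilatL n s t) with hLdef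
  have hL : ∀ y, L y = dilat s t y := fun y => dilatL_apply s t y
  have h1 : HasFDerivAt (fun y => η (L y)) ((fderiv ℝ η (L x)).comp L) x :=
    ((hη.differentiable (by simp) (L x)).hasFDerivAt).comp x L.hasFDerivAt
  have h2 : HasFDerivAt (rescale s η t)
      (t ^ ((s : ℝ) / 2) • ((fderiv ℝ η (L x)).comp L)) x := by
    have h3 := h1.const_smul (t ^ ((s : ℝ) / 2))
    have : rescale s η t = fun y => t ^ ((s : ℝ) / 2) • η (L y) := by
      funext y; rw [rescale, smul_eq_mul, hL]
    rw [this]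
    exact h3
  rw [h2.fderiv, hL]

lemma applyVF_rescale {n : ℕ} (s : ℕ) (η : (Fin n → ℝ) → ℝ) (hη : ContDiff ℝ (⊤ : ℕ∞) η)
    (b : Fin n → (Fin n → ℝ) → ℝ) (t : ℝ) (x : Fin n → ℝ) :
    applyVF b (rescale s η t) x
      = ∑ k : Fin n, t ^ ((s : ℝ) / 2) *
          (((if (k : ℕ) < s then t else 1) * b k x) *
            fderiv ℝ η (dilat s t x) (Pi.single k 1)) := by
  unfold applyVF
  refine Finset.sum_congr rfl fun k _ => ?_
  rw [fderiv_rescale s η hη t x]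
  have hL : (LinearMap.toContinuousLinearMap (dilatL n s t)) (Pi.single k 1)
      = ((if (k : ℕ) < s then t else 1) : ℝ) • (Pi.single k 1 : Fin n → ℝ) := by
    rw [← dilat_single s t k]; exact dilatL_apply s t _
  simp only [ContinuousLinearMap.coe_smul', Pi.smul_apply, ContinuousLinearMap.coe_comp',
    Function.comp_apply, hL, _root_.map_smul, smul_eq_mul]
  ring

lemma norm_pi_single_le {n : ℕ} (k : Fin n) : ‖(Pi.single k 1 : Fin n → ℝ)‖ ≤ 1 := by
  rw [pi_norm_le_iff_of_nonneg zero_le_one]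
  intro i
  rcases eq_or_ne i k with rfl | hik
  · simp
  · simp [Pi.single_eq_of_ne hik]

lemma integral_comp_dilat {n s : ℕ} (hsn : s ≤ n) {t : ℝ} (ht : t ≠ 0)
    (g : (Fin n → ℝ) → ℝ) :
    ∫ x : Fin n → ℝ, g (dilat s t x) ∂volume = |(t ^ s)⁻¹| * ∫ y : Fin n → ℝ, g y ∂volume := by
  have hdet : LinearMap.det (dilatL n s t) ≠ 0 := by
    rw [det_dilatL hsn]; exact pow_ne_zero _ ht
  set e := ((dilatL n s t).equivOfDetNeZero hdet).toContinuousLinearEquiv.toHomeomorph.toMeasurableEquiv with he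
  have hee : ⇑e = ⇑(dilatL n s t) := rfl
  calc ∫ x : Fin n → ℝ, g (dilat s t x) ∂volume
      = ∫ x : Fin n → ℝ, g (e x) ∂volume := by
        congr 1; funext x; rw [hee, dilatL_apply]
    _ = ∫ y, g y ∂(Measure.map e volume) := (integral_map_equiv e g).symm
    _ = ∫ y, g y ∂(ENNReal.ofReal |(LinearMap.det (dilatL n s t))⁻¹| • volume) := by
        rw [hee, Measure.map_linearMap_addHaar_eq_smul_addHaar volume hdet]
    _ = |(t ^ s)⁻¹| * ∫ y : Fin n → ℝ, g y ∂volume := by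
        rw [integral_smul_measure, ENNReal.toReal_ofReal (abs_nonneg _), det_dilatL hsn,
          smul_eq_mul]

/-- generalized Weierstrass counterexample, scaling estimate: if
`η ∈ C_c^∞(ℝⁿ)`, `1 ≤ s ≤ n`, and `X = Σ_k b_k ∂_{x_k}` is a smooth vector field whose
first `s` coefficients vanish on `{x₁ = ⋯ = x_s = 0}`, then `∫ |X η_t|² dx` stays bounded
as `t → +∞`, while `∫ |η_t|² dx = ∫ |η|² dx` for every `t > 0`. -/
theorem weierstrass_scaling {n s : ℕ} (hs : 1 ≤ s) (hsn : s ≤ n)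
    (η : (Fin n → ℝ) → ℝ) (hη : ContDiff ℝ (⊤ : ℕ∞) η) (hηc : HasCompactSupport η)
    (b : Fin n → (Fin n → ℝ) → ℝ) (hb : ∀ k, ContDiff ℝ (⊤ : ℕ∞) (b k))
    (hbvan : ∀ k : Fin n, (k : ℕ) < s →
      ∀ x : Fin n → ℝ, (∀ i : Fin n, (i : ℕ) < s → x i = 0) → b k x = 0) :
    (∃ C : ℝ, ∀ t : ℝ, 1 ≤ t →
      ∫ x : Fin n → ℝ, (applyVF b (rescale s η t) x) ^ 2 ∂volume ≤ C) ∧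
    (∀ t : ℝ, 0 < t →
      ∫ x : Fin n → ℝ, (rescale s η t x) ^ 2 ∂volume =
        ∫ x : Fin n → ℝ, (η x) ^ 2 ∂volume) := by
  constructor
  · classical
    obtain ⟨R₀, hR₀⟩ := hηc.isBounded.subset_closedBall (0 : Fin n → ℝ)
    set R := max R₀ 0 with hRdef
    have hR0 : (0:ℝ) ≤ R := le_max_right _ _
    have hKR : tsupport η ⊆ Metric.closedBall 0 R :=
      hR₀.trans (Metric.closedBall_subset_closedBall (le_max_left _ _))
    obtain ⟨M, hM⟩ := (hηc.fderiv ℝ).exists_bound_of_continuous (hη.continuous_fderiv (by simp))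
    have hM0 : (0:ℝ) ≤ M := le_trans (norm_nonneg _) (hM 0)
    have hCball : ∀ k : Fin n, ∃ Ck : ℝ, 0 ≤ Ck ∧
        (∀ x ∈ Metric.closedBall (0 : Fin n → ℝ) R, |b k x| ≤ Ck) ∧
        (∀ x ∈ Metric.closedBall (0 : Fin n → ℝ) R, ∀ y ∈ Metric.closedBall (0 : Fin n → ℝ) R,
          |b k y - b k x| ≤ Ck * ‖y - x‖) := by
      intro k
      obtain ⟨C₁, hC₁⟩ := (isCompact_closedBall (0 : Fin n → ℝ) R).exists_bound_of_continuousOn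
        (hb k).continuous.continuousOn
      obtain ⟨C₂, hC₂⟩ := (isCompact_closedBall (0 : Fin n → ℝ) R).exists_bound_of_continuousOn
        ((hb k).continuous_fderiv (by simp)).continuousOn
      refine ⟨max (max C₁ C₂) 0, le_max_right _ _, fun x hx => ?_, fun x hx y hy => ?_⟩
      · rw [← Real.norm_eq_abs]
        exact le_trans (hC₁ x hx) (le_max_of_le_left (le_max_left _ _))
      · have := (convex_closedBall (0 : Fin n → ℝ) R).norm_image_sub_le_of_norm_fderiv_le
          (f := b k) (C := max (max C₁ C₂) 0) (fun z _ => ((hb k).differentiable (by simp)).differentiableAt)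
          (fun z hz => le_trans (hC₂ z hz) (le_max_of_le_left (le_max_right _ _))) hx hy
        exact this
    choose Cb hCb0 hCbd hCbl using hCball
    set C0 := (∑ k : Fin n, Cb k) * ((R + 1) * M) with hC0def
    refine ⟨C0 ^ 2 * (volume (tsupport η)).toReal, fun t ht1 => ?_⟩
    have ht0 : (0:ℝ) < t := lt_of_lt_of_le one_pos ht1
    have htne : t ≠ 0 := ne_of_gt ht0
    have hdet : LinearMap.det (dilatL n s t) ≠ 0 := by
      rw [det_dilatL hsn]; exact pow_ne_zero _ htne
    set K := tsupport η with hKdef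
    set U := dilat s t ⁻¹' K with hUdef
    have hdileq : (dilat s t : (Fin n → ℝ) → Fin n → ℝ)
        = ⇑(LinearMap.toContinuousLinearMap (dilatL n s t)) := by
      funext y; exact (dilatL_apply s t y).symm
    have hdilcont : Continuous (dilat s t : (Fin n → ℝ) → Fin n → ℝ) := by
      rw [hdileq]; exact (LinearMap.toContinuousLinearMap (dilatL n s t)).continuous
    have hU : MeasurableSet U := ((isClosed_tsupport η).preimage hdilcont).measurableSet
    have hvolU : volume U = ENNReal.ofReal ((t ^ s)⁻¹) * volume K := by
      have hUeq : U = (dilatL n s t) ⁻¹' K := by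
        ext z; simp [hUdef, Set.mem_preimage, dilatL_apply]
      rw [hUeq, Measure.addHaar_preimage_linearMap volume hdet, det_dilatL hsn,
        abs_of_pos (inv_pos.2 (pow_pos ht0 s))]
    have hvolK : volume K < ⊤ := IsCompact.measure_lt_top hηc
    have hvolU_lt : volume U < ⊤ := by
      rw [hvolU]
      exact ENNReal.mul_lt_top ENNReal.ofReal_lt_top hvolK
    have hsq : t ^ ((s : ℝ) / 2) * t ^ ((s : ℝ) / 2) = t ^ s := by
      rw [← Real.rpow_add ht0]; norm_num
    have hts : (0:ℝ) ≤ t ^ ((s : ℝ) / 2) := Real.rpow_nonneg ht0.le _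
    have hpt : ∀ x : Fin n → ℝ, (applyVF b (rescale s η t) x) ^ 2
        ≤ Set.indicator U (fun _ => t ^ s * C0 ^ 2) x := by
      intro x
      by_cases hx : x ∈ U
      · rw [Set.indicator_of_mem hx]
        have hyK : dilat s t x ∈ K := hx
        have hynorm : ‖dilat s t x‖ ≤ R := by
          have := hKR hyK; rwa [Metric.mem_closedBall, dist_zero_right] at this
        have hcomp : ∀ i : Fin n, |dilat s t x i| ≤ R :=
          fun i => le_trans (norm_le_pi_norm (dilat s t x) i) hynorm
        have hxnorm : ‖x‖ ≤ R := by
          rw [pi_norm_le_iff_of_nonneg hR0]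
          intro i
          rcases lt_or_ge (i : ℕ) s with hi | hi
          · have h1 := hcomp i
            rw [show dilat s t x i = t * x i from if_pos hi, abs_mul, abs_of_pos ht0] at h1
            rw [Real.norm_eq_abs]
            nlinarith [abs_nonneg (x i)]
          · have h1 := hcomp i
            rw [show dilat s t x i = x i from if_neg (not_lt.2 hi)] at h1
            rwa [Real.norm_eq_abs]
        have hxR : x ∈ Metric.closedBall (0 : Fin n → ℝ) R := by
          rwa [Metric.mem_closedBall, dist_zero_right]
        set P := (fun i : Fin n => if (i : ℕ) < s then (0:ℝ) else x i) with hPdef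
        have hPR : P ∈ Metric.closedBall (0 : Fin n → ℝ) R := by
          rw [Metric.mem_closedBall, dist_zero_right, pi_norm_le_iff_of_nonneg hR0]
          intro i
          by_cases hi : (i : ℕ) < s
          · simp [hPdef, hi, hR0]
          · simp only [hPdef, hi, if_false]
            exact le_trans (norm_le_pi_norm x i) hxnorm
        have hxP : ‖x - P‖ ≤ R / t := by
          rw [pi_norm_le_iff_of_nonneg (div_nonneg hR0 ht0.le)]
          intro i
          by_cases hi : (i : ℕ) < s
          · simp only [Pi.sub_apply, hPdef, hi, if_true, sub_zero]
            rw [Real.norm_eq_abs, le_div_iff₀ ht0]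
            have h1 := hcomp i
            rw [show dilat s t x i = t * x i from if_pos hi, abs_mul, abs_of_pos ht0] at h1
            linarith
          · simp [Pi.sub_apply, hPdef, hi, div_nonneg hR0 ht0.le]
        have hterm : ∀ k : Fin n,
            |(if (k : ℕ) < s then t else 1) * b k x| ≤ Cb k * (R + 1) := by
          intro k
          by_cases hk : (k : ℕ) < s
          · rw [if_pos hk]
            have hb0 : b k P = 0 := hbvan k hk P (fun i hi => by simp [hPdef, hi])
            have hlip := hCbl k P hPR x hxR
            rw [hb0, sub_zero] at hlip
            have h2 : |b k x| ≤ Cb k * (R / t) :=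
              hlip.trans (mul_le_mul_of_nonneg_left hxP (hCb0 k))
            rw [abs_mul, abs_of_pos ht0]
            calc t * |b k x| ≤ t * (Cb k * (R / t)) := mul_le_mul_of_nonneg_left h2 ht0.le
              _ = Cb k * R := by field_simp
              _ ≤ Cb k * (R + 1) := mul_le_mul_of_nonneg_left (by linarith) (hCb0 k)
          · rw [if_neg hk, one_mul]
            calc |b k x| ≤ Cb k := hCbd k x hxR
              _ = Cb k * 1 := (mul_one _).symm
              _ ≤ Cb k * (R + 1) := mul_le_mul_of_nonneg_left (by linarith) (hCb0 k)
        have hterm2 : ∀ k : Fin n,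
            |t ^ ((s : ℝ) / 2) * (((if (k : ℕ) < s then t else 1) * b k x) *
              fderiv ℝ η (dilat s t x) (Pi.single k 1))|
              ≤ t ^ ((s : ℝ) / 2) * (Cb k * ((R + 1) * M)) := by
          intro k
          rw [abs_mul, abs_of_nonneg hts]
          refine mul_le_mul_of_nonneg_left ?_ hts
          have hD : |fderiv ℝ η (dilat s t x) (Pi.single k 1)| ≤ M := by
            calc |fderiv ℝ η (dilat s t x) (Pi.single k 1)|
                ≤ ‖fderiv ℝ η (dilat s t x)‖ * ‖(Pi.single k 1 : Fin n → ℝ)‖ :=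
                  (fderiv ℝ η (dilat s t x)).le_opNorm _
              _ ≤ M * 1 := mul_le_mul (hM _) (norm_pi_single_le k) (norm_nonneg _) hM0
              _ = M := mul_one M
          rw [abs_mul]
          calc |(if (k : ℕ) < s then t else 1) * b k x| *
                |fderiv ℝ η (dilat s t x) (Pi.single k 1)|
              ≤ (Cb k * (R + 1)) * M :=
                mul_le_mul (hterm k) hD (abs_nonneg _)
                  (mul_nonneg (hCb0 k) (by linarith))
            _ = Cb k * ((R + 1) * M) := by ring
        have habs : |applyVF b (rescale s η t) x| ≤ t ^ ((s : ℝ) / 2) * C0 := by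
          rw [applyVF_rescale s η hη b t x]
          calc |∑ k : Fin n, t ^ ((s : ℝ) / 2) *
                (((if (k : ℕ) < s then t else 1) * b k x) *
                  fderiv ℝ η (dilat s t x) (Pi.single k 1))|
              ≤ ∑ k : Fin n, |t ^ ((s : ℝ) / 2) *
                (((if (k : ℕ) < s then t else 1) * b k x) *
                  fderiv ℝ η (dilat s t x) (Pi.single k 1))| :=
                Finset.abs_sum_le_sum_abs _ _
            _ ≤ ∑ k : Fin n, t ^ ((s : ℝ) / 2) * (Cb k * ((R + 1) * M)) :=
                Finset.sum_le_sum fun k _ => hterm2 k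
            _ = t ^ ((s : ℝ) / 2) * C0 := by
                rw [← Finset.mul_sum, ← Finset.sum_mul]
        have h2 : (applyVF b (rescale s η t) x) ^ 2 ≤ (t ^ ((s : ℝ) / 2) * C0) ^ 2 := by
          rw [← sq_abs]
          exact pow_le_pow_left₀ (abs_nonneg _) habs 2
        calc (applyVF b (rescale s η t) x) ^ 2 ≤ (t ^ ((s : ℝ) / 2) * C0) ^ 2 := h2
          _ = t ^ s * C0 ^ 2 := by rw [mul_pow, pow_two, hsq]
      · rw [Set.indicator_of_notMem hx]
        have hnot : dilat s t x ∉ tsupport η := hx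
        have hf0 : fderiv ℝ η (dilat s t x) = 0 := fderiv_of_notMem_tsupport _ hnot
        have hzero : applyVF b (rescale s η t) x = 0 := by
          rw [applyVF_rescale s η hη b t x]
          simp [hf0]
        rw [hzero]
        simp
    have hgint : Integrable (Set.indicator U (fun _ => t ^ s * C0 ^ 2)) volume := by
      rw [integrable_indicator_iff hU]
      exact integrableOn_const hvolU_lt.ne
    calc ∫ x : Fin n → ℝ, (applyVF b (rescale s η t) x) ^ 2 ∂volume
        ≤ ∫ x : Fin n → ℝ, Set.indicator U (fun _ => t ^ s * C0 ^ 2) x ∂volume :=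
          integral_mono_of_nonneg (Filter.Eventually.of_forall fun x => sq_nonneg _) hgint
            (Filter.Eventually.of_forall hpt)
      _ = (volume U).toReal • (t ^ s * C0 ^ 2) := integral_indicator_const _ hU
      _ = C0 ^ 2 * (volume (tsupport η)).toReal := by
          rw [hvolU, ENNReal.toReal_mul,
            ENNReal.toReal_ofReal (inv_nonneg.2 (pow_nonneg ht0.le s)), smul_eq_mul]
          have htsne : (t : ℝ) ^ s ≠ 0 := pow_ne_zero _ htne
          field_simp
          ring
  · intro t ht0
    have ht : t ≠ 0 := ne_of_gt ht0
    have hsq : (t ^ ((s : ℝ) / 2)) ^ 2 = t ^ s := by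
      rw [sq, ← Real.rpow_add ht0]
      norm_num
    calc ∫ x : Fin n → ℝ, (rescale s η t x) ^ 2 ∂volume
        = ∫ x : Fin n → ℝ, (t ^ ((s : ℝ) / 2)) ^ 2 * (η (dilat s t x)) ^ 2 ∂volume := by
          congr 1; funext x; rw [rescale, mul_pow]
      _ = (t ^ ((s : ℝ) / 2)) ^ 2 * ∫ x : Fin n → ℝ, (fun y => (η y) ^ 2) (dilat s t x) ∂volume := by
          rw [integral_const_mul]
      _ = t ^ s * (|(t ^ s)⁻¹| * ∫ y : Fin n → ℝ, (η y) ^ 2 ∂volume) := by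
          rw [hsq, integral_comp_dilat hsn ht (fun y => (η y) ^ 2)]
      _ = ∫ x : Fin n → ℝ, (η x) ^ 2 ∂volume := by
          rw [abs_of_pos (inv_pos.2 (pow_pos ht0 s)), ← mul_assoc,
            mul_inv_cancel₀ (pow_ne_zero s ht), one_mul]
end

section
/- Let C be a k-dimensional cell in ℝⁿ in the o-minimal sense. Then C is a topological submanifold of ℝⁿ of dimension k; moreover, if C is a C¹ cell then it is a C¹ submanifold of dimension k. -/
/-- Definability of the graph of `f` over `C' ⊆ ℝⁿ`, as a subset of `ℝ^{n+1}`. -/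
def DefinableGraphOn (S : RealStructure) {n : ℕ} (C' : Set (Fin n → ℝ))
    (f : (Fin n → ℝ) → ℝ) : Prop :=
  {z : Fin (n + 1) → ℝ | Fin.init z ∈ C' ∧ z (Fin.last n) = f (Fin.init z)} ∈ S.defin (n + 1)

/-- `f` is C¹ on `C'` in the sense of admitting a C¹ extension to an open neighborhood. -/
def C1On {n : ℕ} (f : (Fin n → ℝ) → ℝ) (C' : Set (Fin n → ℝ)) : Prop :=
  ∃ U : Set (Fin n → ℝ), IsOpen U ∧ C' ⊆ U ∧
    ∃ F : (Fin n → ℝ) → ℝ, ContDiffOn ℝ 1 F U ∧ Set.EqOn f F C'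

/-- Cells in `ℝⁿ` (o-minimal sense), with their dimension: points and open intervals in
`ℝ¹`; graphs of continuous definable functions over cells; and bands between continuous
definable functions (possibly `±∞`) over cells. -/
inductive IsCell (S : RealStructure) : (n : ℕ) → ℕ → Set (Fin n → ℝ) → Prop
  | point (a : ℝ) : IsCell S 1 0 {x | x 0 = a}
  | interval (a b : ℝ) : IsCell S 1 1 {x | a < x 0 ∧ x 0 < b}
  | intervalLeft (b : ℝ) : IsCell S 1 1 {x | x 0 < b}
  | intervalRight (a : ℝ) : IsCell S 1 1 {x | a < x 0}
  | intervalAll : IsCell S 1 1 Set.univ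
  | graph {n k : ℕ} {C' : Set (Fin n → ℝ)} (f : (Fin n → ℝ) → ℝ) :
      IsCell S n k C' → ContinuousOn f C' → DefinableGraphOn S C' f →
      IsCell S (n + 1) k {x | Fin.init x ∈ C' ∧ x (Fin.last n) = f (Fin.init x)}
  | band {n k : ℕ} {C' : Set (Fin n → ℝ)} (f g : (Fin n → ℝ) → ℝ) :
      IsCell S n k C' → ContinuousOn f C' → ContinuousOn g C' →
      DefinableGraphOn S C' f → DefinableGraphOn S C' g → (∀ x ∈ C', f x < g x) →
      IsCell S (n + 1) (k + 1)
        {x | Fin.init x ∈ C' ∧ f (Fin.init x) < x (Fin.last n) ∧ x (Fin.last n) < g (Fin.init x)}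
  | bandLeft {n k : ℕ} {C' : Set (Fin n → ℝ)} (g : (Fin n → ℝ) → ℝ) :
      IsCell S n k C' → ContinuousOn g C' → DefinableGraphOn S C' g →
      IsCell S (n + 1) (k + 1) {x | Fin.init x ∈ C' ∧ x (Fin.last n) < g (Fin.init x)}
  | bandRight {n k : ℕ} {C' : Set (Fin n → ℝ)} (f : (Fin n → ℝ) → ℝ) :
      IsCell S n k C' → ContinuousOn f C' → DefinableGraphOn S C' f →
      IsCell S (n + 1) (k + 1) {x | Fin.init x ∈ C' ∧ f (Fin.init x) < x (Fin.last n)}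
  | bandAll {n k : ℕ} {C' : Set (Fin n → ℝ)} :
      IsCell S n k C' → IsCell S (n + 1) (k + 1) {x | Fin.init x ∈ C'}

/-- C¹ cells: as cells, but with the defining functions of class C¹. -/
inductive IsC1Cell (S : RealStructure) : (n : ℕ) → ℕ → Set (Fin n → ℝ) → Prop
  | point (a : ℝ) : IsC1Cell S 1 0 {x | x 0 = a}
  | interval (a b : ℝ) : IsC1Cell S 1 1 {x | a < x 0 ∧ x 0 < b}
  | intervalLeft (b : ℝ) : IsC1Cell S 1 1 {x | x 0 < b}
  | intervalRight (a : ℝ) : IsC1Cell S 1 1 {x | a < x 0}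
  | intervalAll : IsC1Cell S 1 1 Set.univ
  | graph {n k : ℕ} {C' : Set (Fin n → ℝ)} (f : (Fin n → ℝ) → ℝ) :
      IsC1Cell S n k C' → ContinuousOn f C' → C1On f C' → DefinableGraphOn S C' f →
      IsC1Cell S (n + 1) k {x | Fin.init x ∈ C' ∧ x (Fin.last n) = f (Fin.init x)}
  | band {n k : ℕ} {C' : Set (Fin n → ℝ)} (f g : (Fin n → ℝ) → ℝ) :
      IsC1Cell S n k C' → ContinuousOn f C' → ContinuousOn g C' →
      C1On f C' → C1On g C' →
      DefinableGraphOn S C' f → DefinableGraphOn S C' g → (∀ x ∈ C', f x < g x) →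
      IsC1Cell S (n + 1) (k + 1)
        {x | Fin.init x ∈ C' ∧ f (Fin.init x) < x (Fin.last n) ∧ x (Fin.last n) < g (Fin.init x)}
  | bandLeft {n k : ℕ} {C' : Set (Fin n → ℝ)} (g : (Fin n → ℝ) → ℝ) :
      IsC1Cell S n k C' → ContinuousOn g C' → C1On g C' → DefinableGraphOn S C' g →
      IsC1Cell S (n + 1) (k + 1) {x | Fin.init x ∈ C' ∧ x (Fin.last n) < g (Fin.init x)}
  | bandRight {n k : ℕ} {C' : Set (Fin n → ℝ)} (f : (Fin n → ℝ) → ℝ) :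
      IsC1Cell S n k C' → ContinuousOn f C' → C1On f C' → DefinableGraphOn S C' f →
      IsC1Cell S (n + 1) (k + 1) {x | Fin.init x ∈ C' ∧ f (Fin.init x) < x (Fin.last n)}
  | bandAll {n k : ℕ} {C' : Set (Fin n → ℝ)} :
      IsC1Cell S n k C' → IsC1Cell S (n + 1) (k + 1) {x | Fin.init x ∈ C'}

/-!
By induction on the cell we build a global straightening of `C`: an open `U ⊇ C` and a
self-homeomorphism `Φ` of `U` fixing the free coordinates and carrying `C` onto `U ∩ slice e k`,
a coordinate `k`-plane up to a permutation `e` of the coordinates. Over such a chart of `C'`, the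
graph of `f` is straightened by `(x', t) ↦ (Φ x', t - f x')` and a band by `(x', t) ↦ (Φ x', t)`.
The defining functions are only given on `C'`; they are extended to `U` by composing with the
retraction `Ψ ∘ (projection to the free coordinates)` of `U` onto `C'`, which is invariant under
`Φ`. For C¹ cells all these maps are C¹. The free coordinates of `Φ` give a homeomorphism of `C`
onto an open subset of `ℝᵏ`.

The C¹ chart at `p` has to map its domain into itself, so the domain must contain a point of the
standard plane. Either `U` meets that plane, and a small affine contraction towards such a point
finishes the job, or there is a ball around a point of the plane that misses `C`; it is adjoined
to a small neighbourhood of `p` with the identity as chart, followed by the same contraction.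
-/

noncomputable section

open Set Metric Filter Topology

section Calculus

variable {E F : Type*} [NormedAddCommGroup E] [NormedSpace ℝ E] [NormedAddCommGroup F]
  [NormedSpace ℝ F] {m : WithTop ℕ∞} {n : ℕ}

lemma ContDiffOn.finSnoc {f : E → Fin n → F} {g : E → F} {s : Set E} (hf : ContDiffOn ℝ m f s)
    (hg : ContDiffOn ℝ m g s) :
    ContDiffOn ℝ m (fun x => (Fin.snoc (f x) (g x) : Fin (n + 1) → F)) s :=
  contDiffOn_pi.mpr fun j => by
    induction j using Fin.lastCases with
    | last => simpa using hg
    | cast i => simpa using contDiffOn_pi.mp hf i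

lemma continuous_init {X : Type*} [TopologicalSpace X] :
    Continuous (fun x : Fin (n + 1) → X => Fin.init x) :=
  continuous_id.finInit

lemma contDiff_init : ContDiff ℝ m (fun x : Fin (n + 1) → F => Fin.init x) :=
  contDiff_pi.mpr fun i => contDiff_apply ℝ F i.castSucc

end Calculus

lemma isOpen_setOf_mem_and_lt {X β : Type*} [TopologicalSpace X] [LinearOrder β]
    [TopologicalSpace β] [OrderClosedTopology β] {s : Set X} {a b : X → β} (hs : IsOpen s)
    (ha : ContinuousOn a s) (hb : ContinuousOn b s) : IsOpen {x | x ∈ s ∧ a x < b x} :=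
  (ha.prodMk hb).isOpen_inter_preimage hs (isOpen_lt continuous_fst continuous_snd)

lemma ContinuousOn.coe_ereal {X : Type*} [TopologicalSpace X] {f : X → ℝ} {s : Set X}
    (hf : ContinuousOn f s) : ContinuousOn (fun x => (f x : EReal)) s :=
  continuous_coe_real_ereal.comp_continuousOn hf

namespace CellSubmanifold

section Slice

variable {n : ℕ} (e : Fin n ≃ Fin n) (k : ℕ)

/-- Coordinates `i` with `k ≤ e i` vanish; the others (`e i < k`) are the free coordinates. -/
def slice : Set (Fin n → ℝ) := {x | ∀ i, k ≤ (e i : ℕ) → x i = 0}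

def sliceProj (x : Fin n → ℝ) : Fin n → ℝ := fun i => if k ≤ (e i : ℕ) then 0 else x i

abbrev coordPlane (n k : ℕ) : Set (Fin n → ℝ) := slice (Equiv.refl (Fin n)) k

variable {e k}

lemma sliceProj_mem_slice (x : Fin n → ℝ) : sliceProj e k x ∈ slice e k := by
  intro i hi
  simp [sliceProj, hi]

lemma sliceProj_congr {x y : Fin n → ℝ} (h : ∀ i, (e i : ℕ) < k → x i = y i) :
    sliceProj e k x = sliceProj e k y := by
  funext i
  by_cases hi : k ≤ (e i : ℕ)
  · simp [sliceProj, hi]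
  · simp [sliceProj, hi, h i (not_le.mp hi)]

lemma sliceProj_of_mem {x : Fin n → ℝ} (hx : x ∈ slice e k) : sliceProj e k x = x := by
  funext i
  by_cases hi : k ≤ (e i : ℕ)
  · simp [sliceProj, hi, hx i hi]
  · simp [sliceProj, hi]

lemma sliceProj_apply_of_lt (x : Fin n → ℝ) {i : Fin n} (hi : (e i : ℕ) < k) :
    sliceProj e k x i = x i := by
  simp [sliceProj, not_le.mpr hi]

variable (e k) in
lemma contDiff_sliceProj {m : WithTop ℕ∞} : ContDiff ℝ m (sliceProj e k) :=
  contDiff_pi.mpr fun i => by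
    by_cases hi : k ≤ (e i : ℕ)
    · simpa [sliceProj, hi] using contDiff_const
    · simpa [sliceProj, hi] using contDiff_apply ℝ ℝ i

variable (e k) in
lemma isClosed_slice : IsClosed (slice e k) := by
  simp only [slice, ofPred_forall]
  exact isClosed_iInter fun i => isClosed_iInter fun _ =>
    isClosed_eq (continuous_apply i) continuous_const

lemma coordPlane_mono {k k' : ℕ} (h : k ≤ k') : coordPlane n k ⊆ coordPlane n k' :=
  fun _ hx i hi => hx i (h.trans hi)

lemma coordPlane_self : coordPlane n n = univ :=
  eq_univ_of_forall fun _ i hi => absurd i.isLt (not_lt.mpr (by simpa using hi))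

lemma snoc_zero_mem_coordPlane {c : Fin n → ℝ} (hc : c ∈ coordPlane n k) :
    (Fin.snoc c 0 : Fin (n + 1) → ℝ) ∈ coordPlane (n + 1) k := by
  intro j hj
  induction j using Fin.lastCases with
  | last => simp
  | cast i => simpa using hc i (by simpa using hj)

end Slice

section InsertLast

variable {n k : ℕ} {e : Fin n ≃ Fin n}

/-- The permutation of `Fin (n + 1)` acting as `e` on `Fin n` and sending the last index
to `p`, the other indices moving out of its way. -/
def insertLast (e : Fin n ≃ Fin n) (p : Fin (n + 1)) : Fin (n + 1) ≃ Fin (n + 1) :=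
  finSuccEquivLast.trans ((Equiv.optionCongr e).trans (finSuccEquiv' p).symm)

@[simp] lemma insertLast_last (p : Fin (n + 1)) : insertLast e p (Fin.last n) = p := by
  simp [insertLast, finSuccEquiv'_symm_none]

@[simp] lemma insertLast_castSucc (p : Fin (n + 1)) (i : Fin n) :
    insertLast e p i.castSucc = p.succAbove (e i) := by
  simp [insertLast, finSuccEquiv'_symm_some]

lemma lt_succAbove_iff (hk : k < n + 1) (j : Fin n) :
    k < ((⟨k, hk⟩ : Fin (n + 1)).succAbove j : ℕ) ↔ k ≤ j := by
  simp only [Fin.succAbove, Fin.lt_def]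
  split_ifs <;> simp_all; omega

lemma succAbove_le_iff (hk : k < n + 1) (j : Fin n) :
    ((⟨k, hk⟩ : Fin (n + 1)).succAbove j : ℕ) ≤ k ↔ (j : ℕ) < k := by
  simpa only [not_lt, not_le] using (lt_succAbove_iff hk j).not

lemma snoc_mem_slice_insertLast_last (hk : k ≤ n) {y : Fin n → ℝ} {t : ℝ} :
    (Fin.snoc y t : Fin (n + 1) → ℝ) ∈ slice (insertLast e (Fin.last n)) k ↔
      y ∈ slice e k ∧ t = 0 := by
  simp [slice, Fin.forall_fin_succ', hk]

lemma snoc_mem_slice_insertLast (hk : k < n + 1) {y : Fin n → ℝ} {t : ℝ} :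
    (Fin.snoc y t : Fin (n + 1) → ℝ) ∈ slice (insertLast e ⟨k, hk⟩) (k + 1) ↔ y ∈ slice e k := by
  simp [slice, Fin.forall_fin_succ', lt_succAbove_iff]

lemma init_sliceProj_insertLast_last (x : Fin (n + 1) → ℝ) :
    Fin.init (sliceProj (insertLast e (Fin.last n)) k x) = sliceProj e k (Fin.init x) := by
  funext i
  simp [sliceProj, Fin.init]

lemma sliceProj_insertLast (hk : k < n + 1) (x : Fin (n + 1) → ℝ) :
    sliceProj (insertLast e ⟨k, hk⟩) (k + 1) x =
      Fin.snoc (sliceProj e k (Fin.init x)) (x (Fin.last n)) := by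
  funext j
  induction j using Fin.lastCases with
  | last => simp [sliceProj]
  | cast i => simp [sliceProj, lt_succAbove_iff, Fin.init]

end InsertLast

structure Chart (n k : ℕ) (C : Set (Fin n → ℝ)) where
  e : Fin n ≃ Fin n
  U : Set (Fin n → ℝ)
  Φ : (Fin n → ℝ) → Fin n → ℝ
  Ψ : (Fin n → ℝ) → Fin n → ℝ
  le : k ≤ n
  isOpen_U : IsOpen U
  subset_U : C ⊆ U
  continuousOn_Φ : ContinuousOn Φ U
  continuousOn_Ψ : ContinuousOn Ψ U
  mapsTo_Φ : MapsTo Φ U U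
  mapsTo_Ψ : MapsTo Ψ U U
  Ψ_Φ : ∀ x ∈ U, Ψ (Φ x) = x
  Φ_Ψ : ∀ y ∈ U, Φ (Ψ y) = y
  Φ_apply_of_lt : ∀ x ∈ U, ∀ i, (e i : ℕ) < k → Φ x i = x i
  sliceProj_mem : ∀ x ∈ U, sliceProj e k x ∈ U
  mem_iff : ∀ x ∈ U, x ∈ C ↔ Φ x ∈ slice e k

namespace Chart

section Basic

variable {n k : ℕ} {C : Set (Fin n → ℝ)} (ch : Chart n k C)

lemma image_Φ : ch.Φ '' ch.U = ch.U :=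
  ch.mapsTo_Φ.image_subset.antisymm fun y hy => ⟨ch.Ψ y, ch.mapsTo_Ψ hy, ch.Φ_Ψ y hy⟩

lemma Ψ_apply_of_lt {y : Fin n → ℝ} (hy : y ∈ ch.U) {i : Fin n} (hi : (ch.e i : ℕ) < k) :
    ch.Ψ y i = y i := by
  conv_rhs => rw [← ch.Φ_Ψ y hy]
  exact (ch.Φ_apply_of_lt _ (ch.mapsTo_Ψ hy) i hi).symm

lemma Ψ_mem_of_mem_slice {y : Fin n → ℝ} (hy : y ∈ ch.U) (hs : y ∈ slice ch.e k) : ch.Ψ y ∈ C :=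
  (ch.mem_iff _ (ch.mapsTo_Ψ hy)).mpr (by rwa [ch.Φ_Ψ y hy])

lemma isOpen_diff : IsOpen (ch.U \ C) := by
  have : ch.U \ C = ch.U ∩ ch.Φ ⁻¹' (slice ch.e k)ᶜ := by
    ext x
    simp only [Set.mem_sdiff, mem_inter_iff, mem_preimage, mem_compl_iff]
    exact and_congr_right fun hx => not_congr (ch.mem_iff x hx)
  rw [this]
  exact ch.continuousOn_Φ.isOpen_inter_preimage ch.isOpen_U (isClosed_slice _ _).isOpen_compl

/-- The retraction of `U` onto `C` along the fibres of the projection to the free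
coordinates. -/
def retract (x : Fin n → ℝ) : Fin n → ℝ := ch.Ψ (sliceProj ch.e k x)

lemma retract_mem {x : Fin n → ℝ} (hx : x ∈ ch.U) : ch.retract x ∈ C :=
  ch.Ψ_mem_of_mem_slice (ch.sliceProj_mem x hx) (sliceProj_mem_slice x)

lemma retract_congr {x y : Fin n → ℝ} (h : ∀ i, (ch.e i : ℕ) < k → x i = y i) :
    ch.retract x = ch.retract y := by
  rw [retract, retract, sliceProj_congr h]

lemma retract_of_mem {x : Fin n → ℝ} (hx : x ∈ C) : ch.retract x = x := by
  have hxU := ch.subset_U hx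
  have hslice : sliceProj ch.e k x = ch.Φ x := by
    rw [← sliceProj_of_mem ((ch.mem_iff x hxU).mp hx)]
    exact sliceProj_congr fun i hi => (ch.Φ_apply_of_lt x hxU i hi).symm
  rw [retract, hslice, ch.Ψ_Φ x hxU]

lemma retract_Φ {x : Fin n → ℝ} (hx : x ∈ ch.U) : ch.retract (ch.Φ x) = ch.retract x :=
  ch.retract_congr (ch.Φ_apply_of_lt x hx)

lemma retract_Ψ {y : Fin n → ℝ} (hy : y ∈ ch.U) : ch.retract (ch.Ψ y) = ch.retract y :=
  ch.retract_congr fun _ hi => ch.Ψ_apply_of_lt hy hi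

lemma retract_sliceProj (x : Fin n → ℝ) : ch.retract (sliceProj ch.e k x) = ch.retract x :=
  ch.retract_congr fun _ hi => sliceProj_apply_of_lt x hi

lemma eq_of_apply_eq {x y : Fin n → ℝ} (hx : x ∈ C) (hy : y ∈ C)
    (h : ∀ i, (ch.e i : ℕ) < k → x i = y i) : x = y := by
  rw [← ch.retract_of_mem hx, ← ch.retract_of_mem hy, ch.retract_congr h]

lemma continuousOn_retract : ContinuousOn ch.retract ch.U :=
  ch.continuousOn_Ψ.comp (contDiff_sliceProj ch.e k (m := 0)).continuous.continuousOn
    ch.sliceProj_mem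

lemma continuousOn_comp_retract {β : Type*} [TopologicalSpace β] {f : (Fin n → ℝ) → β}
    (hf : ContinuousOn f C) : ContinuousOn (f ∘ ch.retract) ch.U :=
  hf.comp ch.continuousOn_retract fun _ => ch.retract_mem

def IsC1 : Prop := ContDiffOn ℝ 1 ch.Φ ch.U ∧ ContDiffOn ℝ 1 ch.Ψ ch.U

variable {ch}

lemma IsC1.contDiffOn_retract (h : ch.IsC1) : ContDiffOn ℝ 1 ch.retract ch.U :=
  h.2.comp (contDiff_sliceProj ch.e k).contDiffOn ch.sliceProj_mem

lemma IsC1.contDiffOn_comp_retract (h : ch.IsC1) {f : (Fin n → ℝ) → ℝ} (hf : C1On f C) :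
    ContDiffOn ℝ 1 (f ∘ ch.retract) ch.U := by
  obtain ⟨W, -, hCW, F, hF, hfF⟩ := hf
  refine (hF.comp h.contDiffOn_retract fun x hx => hCW (ch.retract_mem hx)).congr fun x hx => ?_
  exact hfF (ch.retract_mem hx)

end Basic

def ofIsOpen {n : ℕ} {D : Set (Fin n → ℝ)} (hD : IsOpen D) : Chart n n D where
  e := Equiv.refl _
  U := D
  Φ := id
  Ψ := id
  le := le_rfl
  isOpen_U := hD
  subset_U := subset_rfl
  continuousOn_Φ := continuousOn_id
  continuousOn_Ψ := continuousOn_id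
  mapsTo_Φ := mapsTo_id _
  mapsTo_Ψ := mapsTo_id _
  Ψ_Φ _ _ := rfl
  Φ_Ψ _ _ := rfl
  Φ_apply_of_lt _ _ _ _ := rfl
  sliceProj_mem x hx := by
    rwa [sliceProj_of_mem (by simp [coordPlane_self] : x ∈ coordPlane n n)]
  mem_iff x hx := by simp [hx, coordPlane_self]

lemma isC1_ofIsOpen {n : ℕ} {D : Set (Fin n → ℝ)} (hD : IsOpen D) : (ofIsOpen hD).IsC1 :=
  ⟨contDiffOn_id, contDiffOn_id⟩

variable {n k : ℕ} {C' : Set (Fin n → ℝ)} (ch : Chart n k C')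

def graph (f : (Fin n → ℝ) → ℝ) (hf : ContinuousOn f C') :
    Chart (n + 1) k {x | Fin.init x ∈ C' ∧ x (Fin.last n) = f (Fin.init x)} where
  e := insertLast ch.e (Fin.last n)
  U := {x | Fin.init x ∈ ch.U}
  Φ x := Fin.snoc (ch.Φ (Fin.init x)) (x (Fin.last n) - f (ch.retract (Fin.init x)))
  Ψ y := Fin.snoc (ch.Ψ (Fin.init y)) (y (Fin.last n) + f (ch.retract (Fin.init y)))
  le := ch.le.trans n.le_succ
  isOpen_U := ch.isOpen_U.preimage continuous_init
  subset_U _ hx := ch.subset_U hx.1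
  continuousOn_Φ :=
    (ch.continuousOn_Φ.comp continuous_init.continuousOn fun _ => id).finSnoc
      ((continuous_apply _).continuousOn.sub ((ch.continuousOn_comp_retract hf).comp
        continuous_init.continuousOn fun _ => id))
  continuousOn_Ψ :=
    (ch.continuousOn_Ψ.comp continuous_init.continuousOn fun _ => id).finSnoc
      ((continuous_apply _).continuousOn.add ((ch.continuousOn_comp_retract hf).comp
        continuous_init.continuousOn fun _ => id))
  mapsTo_Φ x hx := by simpa using ch.mapsTo_Φ hx
  mapsTo_Ψ y hy := by simpa using ch.mapsTo_Ψ hy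
  Ψ_Φ x hx := by simp [ch.Ψ_Φ _ hx, ch.retract_Φ hx, Fin.snoc_init_self]
  Φ_Ψ y hy := by simp [ch.Φ_Ψ _ hy, ch.retract_Ψ hy, Fin.snoc_init_self]
  Φ_apply_of_lt x hx j hj := by
    induction j using Fin.lastCases with
    | last => simp at hj; have := ch.le; omega
    | cast i => simpa [Fin.init] using ch.Φ_apply_of_lt _ hx i (by simpa using hj)
  sliceProj_mem x hx := by
    simpa [init_sliceProj_insertLast_last] using ch.sliceProj_mem _ hx
  mem_iff x hx := by
    rw [snoc_mem_slice_insertLast_last ch.le, ← ch.mem_iff _ hx, mem_ofPred_eq, sub_eq_zero]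
    exact and_congr_right fun h => by rw [ch.retract_of_mem h]

end Chart

section Band

variable {n : ℕ}

/-- Bounds `⊥` and `⊤` give the unbounded bands. -/
def bandSet (C' : Set (Fin n → ℝ)) (lo hi : (Fin n → ℝ) → EReal) : Set (Fin (n + 1) → ℝ) :=
  {x | Fin.init x ∈ C' ∧ lo (Fin.init x) < x (Fin.last n) ∧
    (x (Fin.last n) : EReal) < hi (Fin.init x)}

lemma isOpen_bandSet {U : Set (Fin n → ℝ)} {lo hi : (Fin n → ℝ) → EReal} (hU : IsOpen U)
    (hlo : ContinuousOn lo U) (hhi : ContinuousOn hi U) : IsOpen (bandSet U lo hi) := by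
  have hinit : ContinuousOn (fun x : Fin (n + 1) → ℝ => Fin.init x) {x | Fin.init x ∈ U} :=
    continuous_init.continuousOn
  have hlast : Continuous fun x : Fin (n + 1) → ℝ => (x (Fin.last n) : EReal) :=
    continuous_coe_real_ereal.comp (continuous_apply _)
  have hUinit : IsOpen {x : Fin (n + 1) → ℝ | Fin.init x ∈ U} :=
    hU.preimage continuous_init
  convert (isOpen_setOf_mem_and_lt hUinit (hlo.comp hinit fun _ => id) hlast.continuousOn).inter
    (isOpen_setOf_mem_and_lt hUinit hlast.continuousOn (hhi.comp hinit fun _ => id)) using 1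
  ext x
  simp only [bandSet, mem_inter_iff, mem_ofPred_eq, Function.comp]
  tauto

lemma point_eq_graph (a : ℝ) : {x : Fin 1 → ℝ | x 0 = a} =
    {x : Fin 1 → ℝ | Fin.init x ∈ (univ : Set (Fin 0 → ℝ)) ∧
      x (Fin.last 0) = (fun _ => a) (Fin.init x)} := by
  ext x
  simp [Fin.last]

lemma interval_eq_bandSet (a b : ℝ) : {x : Fin 1 → ℝ | a < x 0 ∧ x 0 < b} =
    bandSet (univ : Set (Fin 0 → ℝ)) (fun _ => (a : EReal)) (fun _ => (b : EReal)) := by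
  ext x
  simp [bandSet, Fin.last]

lemma intervalLeft_eq_bandSet (b : ℝ) : {x : Fin 1 → ℝ | x 0 < b} =
    bandSet (univ : Set (Fin 0 → ℝ)) ⊥ (fun _ => (b : EReal)) := by
  ext x
  simp [bandSet, Fin.last]

lemma intervalRight_eq_bandSet (a : ℝ) : {x : Fin 1 → ℝ | a < x 0} =
    bandSet (univ : Set (Fin 0 → ℝ)) (fun _ => (a : EReal)) ⊤ := by
  ext x
  simp [bandSet, Fin.last]

lemma univ_eq_bandSet : (univ : Set (Fin 1 → ℝ)) = bandSet (univ : Set (Fin 0 → ℝ)) ⊥ ⊤ := by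
  ext x
  simp [bandSet]

lemma bandSet_coe_coe (C' : Set (Fin n → ℝ)) (f g : (Fin n → ℝ) → ℝ) :
    bandSet C' (fun x => (f x : EReal)) (fun x => (g x : EReal)) = {x : Fin (n + 1) → ℝ |
      Fin.init x ∈ C' ∧ f (Fin.init x) < x (Fin.last n) ∧ x (Fin.last n) < g (Fin.init x)} := by
  ext x
  simp [bandSet]

lemma bandSet_bot_coe (C' : Set (Fin n → ℝ)) (g : (Fin n → ℝ) → ℝ) :
    bandSet C' ⊥ (fun x => (g x : EReal)) =
      {x : Fin (n + 1) → ℝ | Fin.init x ∈ C' ∧ x (Fin.last n) < g (Fin.init x)} := by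
  ext x
  simp [bandSet]

lemma bandSet_coe_top (C' : Set (Fin n → ℝ)) (f : (Fin n → ℝ) → ℝ) :
    bandSet C' (fun x => (f x : EReal)) ⊤ =
      {x : Fin (n + 1) → ℝ | Fin.init x ∈ C' ∧ f (Fin.init x) < x (Fin.last n)} := by
  ext x
  simp [bandSet]

lemma bandSet_bot_top (C' : Set (Fin n → ℝ)) :
    bandSet C' ⊥ ⊤ = {x : Fin (n + 1) → ℝ | Fin.init x ∈ C'} := by
  ext x
  simp [bandSet]

end Band

namespace Chart

variable {n k : ℕ} {C' : Set (Fin n → ℝ)} (ch : Chart n k C')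

def band (lo hi : (Fin n → ℝ) → EReal) (hlo : ContinuousOn lo C') (hhi : ContinuousOn hi C') :
    Chart (n + 1) (k + 1) (bandSet C' lo hi) where
  e := insertLast ch.e ⟨k, Nat.lt_succ_of_le ch.le⟩
  U := bandSet ch.U (lo ∘ ch.retract) (hi ∘ ch.retract)
  Φ x := Fin.snoc (ch.Φ (Fin.init x)) (x (Fin.last n))
  Ψ y := Fin.snoc (ch.Ψ (Fin.init y)) (y (Fin.last n))
  le := Nat.succ_le_succ ch.le
  isOpen_U := isOpen_bandSet ch.isOpen_U (ch.continuousOn_comp_retract hlo)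
    (ch.continuousOn_comp_retract hhi)
  subset_U x hx := by
    obtain ⟨h, hlo, hhi⟩ := hx
    exact ⟨ch.subset_U h, by simpa [ch.retract_of_mem h] using hlo,
      by simpa [ch.retract_of_mem h] using hhi⟩
  continuousOn_Φ :=
    (ch.continuousOn_Φ.comp continuous_init.continuousOn fun _ h => h.1).finSnoc
      (continuous_apply _).continuousOn
  continuousOn_Ψ :=
    (ch.continuousOn_Ψ.comp continuous_init.continuousOn fun _ h => h.1).finSnoc
      (continuous_apply _).continuousOn
  mapsTo_Φ x hx := by
    obtain ⟨h, hlo, hhi⟩ := hx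
    exact ⟨by simpa using ch.mapsTo_Φ h, by simpa [ch.retract_Φ h] using hlo,
      by simpa [ch.retract_Φ h] using hhi⟩
  mapsTo_Ψ y hy := by
    obtain ⟨h, hlo, hhi⟩ := hy
    exact ⟨by simpa using ch.mapsTo_Ψ h, by simpa [ch.retract_Ψ h] using hlo,
      by simpa [ch.retract_Ψ h] using hhi⟩
  Ψ_Φ x hx := by simp [ch.Ψ_Φ _ hx.1, Fin.snoc_init_self]
  Φ_Ψ y hy := by simp [ch.Φ_Ψ _ hy.1, Fin.snoc_init_self]
  Φ_apply_of_lt x hx j hj := by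
    induction j using Fin.lastCases with
    | last => simp
    | cast i =>
      simpa [Fin.init] using ch.Φ_apply_of_lt _ hx.1 i (by simpa [succAbove_le_iff] using hj)
  sliceProj_mem x hx := by
    obtain ⟨h, hlo, hhi⟩ := hx
    rw [sliceProj_insertLast]
    exact ⟨by simpa using ch.sliceProj_mem _ h, by simpa [ch.retract_sliceProj] using hlo,
      by simpa [ch.retract_sliceProj] using hhi⟩
  mem_iff x hx := by
    obtain ⟨h, hlo, hhi⟩ := hx
    rw [snoc_mem_slice_insertLast, ← ch.mem_iff _ h]
    refine ⟨fun hC => hC.1, fun hC => ⟨hC, ?_, ?_⟩⟩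
    · simpa [ch.retract_of_mem hC] using hlo
    · simpa [ch.retract_of_mem hC] using hhi

variable {ch}

lemma IsC1.graph (h : ch.IsC1) {f : (Fin n → ℝ) → ℝ} (hf : ContinuousOn f C') (hf1 : C1On f C') :
    (ch.graph f hf).IsC1 := by
  have hinit : ContDiffOn ℝ 1 (fun x : Fin (n + 1) → ℝ => Fin.init x) (ch.graph f hf).U :=
    contDiff_init.contDiffOn
  have hfr := (h.contDiffOn_comp_retract hf1).comp hinit fun _ => id
  exact ⟨(h.1.comp hinit fun _ => id).finSnoc ((contDiff_apply ℝ ℝ _).contDiffOn.sub hfr),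
    (h.2.comp hinit fun _ => id).finSnoc ((contDiff_apply ℝ ℝ _).contDiffOn.add hfr)⟩

lemma IsC1.band (h : ch.IsC1) {lo hi : (Fin n → ℝ) → EReal} (hlo : ContinuousOn lo C')
    (hhi : ContinuousOn hi C') : (ch.band lo hi hlo hhi).IsC1 := by
  have hinit : ContDiffOn ℝ 1 (fun x : Fin (n + 1) → ℝ => Fin.init x) (ch.band lo hi hlo hhi).U :=
    contDiff_init.contDiffOn
  exact ⟨(h.1.comp hinit fun _ h => h.1).finSnoc (contDiff_apply ℝ ℝ _).contDiffOn,
    (h.2.comp hinit fun _ h => h.1).finSnoc (contDiff_apply ℝ ℝ _).contDiffOn⟩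

end Chart

section SliceCoords

variable {n k : ℕ} (e : Fin n ≃ Fin n)

def sliceCoords (hk : k ≤ n) (y : Fin n → ℝ) : Fin k → ℝ := fun j => y (e.symm (Fin.castLE hk j))

def sliceEmbed (k : ℕ) (v : Fin k → ℝ) : Fin n → ℝ :=
  fun i => if h : (e i : ℕ) < k then v ⟨e i, h⟩ else 0

lemma sliceEmbed_mem_slice (v : Fin k → ℝ) : sliceEmbed e k v ∈ slice e k := by
  intro i hi
  simp [sliceEmbed, not_lt.mpr hi]

lemma sliceCoords_sliceEmbed (hk : k ≤ n) (v : Fin k → ℝ) :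
    sliceCoords e hk (sliceEmbed e k v) = v := by
  funext j
  simp [sliceCoords, sliceEmbed]

lemma sliceEmbed_sliceCoords (hk : k ≤ n) {y : Fin n → ℝ} (hy : y ∈ slice e k) :
    sliceEmbed e k (sliceCoords e hk y) = y := by
  funext i
  by_cases h : (e i : ℕ) < k
  · simp [sliceEmbed, sliceCoords, h, Fin.castLE]
  · simp [sliceEmbed, h, hy i (not_lt.mp h)]

lemma continuous_sliceCoords (hk : k ≤ n) : Continuous (sliceCoords e hk) :=
  continuous_pi fun _ => continuous_apply _

lemma continuous_sliceEmbed : Continuous (sliceEmbed e k) :=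
  continuous_pi fun i => by
    by_cases h : (e i : ℕ) < k
    · simpa [sliceEmbed, h] using continuous_apply _
    · simpa [sliceEmbed, h] using continuous_const

end SliceCoords

namespace Chart

variable {n k : ℕ} {C : Set (Fin n → ℝ)} (ch : Chart n k C)

lemma sliceEmbed_sliceCoords_Φ {x : Fin n → ℝ} (hx : x ∈ C) :
    sliceEmbed ch.e k (sliceCoords ch.e ch.le (ch.Φ x)) = ch.Φ x :=
  sliceEmbed_sliceCoords _ ch.le ((ch.mem_iff _ (ch.subset_U hx)).mp hx)

def homeomorph : C ≃ₜ sliceEmbed ch.e k ⁻¹' ch.U where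
  toFun x := ⟨sliceCoords ch.e ch.le (ch.Φ x), show sliceEmbed ch.e k _ ∈ ch.U by
    rw [ch.sliceEmbed_sliceCoords_Φ x.2]
    exact ch.mapsTo_Φ (ch.subset_U x.2)⟩
  invFun v := ⟨ch.Ψ (sliceEmbed ch.e k v), ch.Ψ_mem_of_mem_slice v.2 (sliceEmbed_mem_slice _ _)⟩
  left_inv x := Subtype.ext <| by
    simp only [ch.sliceEmbed_sliceCoords_Φ x.2, ch.Ψ_Φ _ (ch.subset_U x.2)]
  right_inv v := Subtype.ext <| by simp only [ch.Φ_Ψ _ v.2, sliceCoords_sliceEmbed]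
  continuous_toFun := ((continuous_sliceCoords _ ch.le).comp (ch.continuousOn_Φ.comp_continuous
    continuous_subtype_val fun x => ch.subset_U x.2)).subtype_mk _
  continuous_invFun := (ch.continuousOn_Ψ.comp_continuous
    ((continuous_sliceEmbed _).comp continuous_subtype_val) fun v => v.2).subtype_mk _

lemma isOpen_preimage_sliceEmbed : IsOpen (sliceEmbed ch.e k ⁻¹' ch.U) :=
  ch.isOpen_U.preimage (continuous_sliceEmbed _)

end Chart

theorem IsCell.nonempty_chart {S : RealStructure} {n k : ℕ} {C : Set (Fin n → ℝ)}
    (h : IsCell S n k C) : Nonempty (Chart n k C) := by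
  induction h with
  | point a =>
    rw [point_eq_graph]
    exact ⟨(Chart.ofIsOpen isOpen_univ).graph _ continuousOn_const⟩
  | interval a b =>
    rw [interval_eq_bandSet]
    exact ⟨(Chart.ofIsOpen isOpen_univ).band _ _ continuousOn_const continuousOn_const⟩
  | intervalLeft b =>
    rw [intervalLeft_eq_bandSet]
    exact ⟨(Chart.ofIsOpen isOpen_univ).band _ _ continuousOn_const continuousOn_const⟩
  | intervalRight a =>
    rw [intervalRight_eq_bandSet]
    exact ⟨(Chart.ofIsOpen isOpen_univ).band _ _ continuousOn_const continuousOn_const⟩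
  | intervalAll =>
    rw [univ_eq_bandSet]
    exact ⟨(Chart.ofIsOpen isOpen_univ).band _ _ continuousOn_const continuousOn_const⟩
  | graph f _ hf _ ih => exact ⟨ih.some.graph f hf⟩
  | band f g _ hf hg _ _ _ ih =>
    rw [← bandSet_coe_coe]
    exact ⟨ih.some.band _ _ hf.coe_ereal hg.coe_ereal⟩
  | bandLeft g _ hg _ ih =>
    rw [← bandSet_bot_coe]
    exact ⟨ih.some.band _ _ continuousOn_const hg.coe_ereal⟩
  | bandRight f _ hf _ ih =>
    rw [← bandSet_coe_top]
    exact ⟨ih.some.band _ _ hf.coe_ereal continuousOn_const⟩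
  | bandAll _ ih =>
    rw [← bandSet_bot_top]
    exact ⟨ih.some.band _ _ continuousOn_const continuousOn_const⟩

lemma exists_le_le_apply {n k : ℕ} (e : Fin n ≃ Fin n) (hk : k < n) :
    ∃ i : Fin n, (i : ℕ) ≤ k ∧ k ≤ (e i : ℕ) := by
  by_contra! h
  have := Fintype.card_le_of_injective
    (fun j : Fin (k + 1) => (⟨e (Fin.castLE hk j), h _ (Nat.lt_succ_iff.mp j.isLt)⟩ : Fin k))
    fun a b hab => Fin.castLE_injective _ (e.injective (Fin.ext (Fin.mk.inj_iff.mp hab)))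
  simp at this

lemma compl_union_mem_nhds_snoc {n : ℕ} {C' S' : Set (Fin n → ℝ)} {C S : Set (Fin (n + 1) → ℝ)}
    {c : Fin n → ℝ} (h : (C' ∪ S')ᶜ ∈ 𝓝 c) (hC : ∀ x ∈ C, Fin.init x ∈ C')
    (hS : ∀ x ∈ S, Fin.init x ∈ S') (t : ℝ) : (C ∪ S)ᶜ ∈ 𝓝 (Fin.snoc c t : Fin (n + 1) → ℝ) :=
  mem_of_superset (continuous_init.continuousAt.preimage_mem_nhds
    (by rwa [Fin.init_snoc] : (C' ∪ S')ᶜ ∈ 𝓝 (Fin.init (Fin.snoc c t : Fin (n + 1) → ℝ))))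
    fun x hx hxCS => hx (hxCS.imp (hC x) (hS x))

namespace Chart

variable {n k : ℕ} {C : Set (Fin n → ℝ)}

def HasPlanePoint (ch : Chart n k C) : Prop :=
  (∃ c ∈ coordPlane n k, c ∈ ch.U) ∨ ∃ c ∈ coordPlane n k, (C ∪ slice ch.e k)ᶜ ∈ 𝓝 c

lemma hasPlanePoint_ofIsOpen {D : Set (Fin n → ℝ)} (hD : IsOpen D) (hne : D.Nonempty) :
    (ofIsOpen hD).HasPlanePoint :=
  Or.inl (hne.imp fun c hc => ⟨by simp [coordPlane_self], hc⟩)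

/-- Each of `C` and `slice e k` meets a line in the direction of a non-free coordinate at most
once. -/
lemma exists_mem_coordPlane_succ (ch : Chart n k C) (hk : k < n) {c : Fin n → ℝ}
    (hc : c ∈ coordPlane n k) (hcU : c ∈ ch.U) :
    ∃ u ∈ ch.U, u ∈ coordPlane n (k + 1) ∧ u ∉ C ∧ u ∉ slice ch.e k := by
  obtain ⟨i₀, hi₀, hfix⟩ := exists_le_le_apply ch.e hk
  set u : ℝ → Fin n → ℝ := fun t => Function.update c i₀ (c i₀ + t)
  have hu : Continuous u := continuous_const.update i₀ (continuous_const.add continuous_id)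
  have hU : {t | u t ∈ ch.U} ∈ 𝓝 0 :=
    hu.continuousAt.preimage_mem_nhds (by simpa [u] using ch.isOpen_U.mem_nhds hcU)
  have hC : {t | u t ∈ C}.Subsingleton := fun t ht t' ht' => by
    have := congrFun (ch.eq_of_apply_eq ht ht' fun i hi => ?_) i₀
    · simpa [u] using this
    · have : i ≠ i₀ := by rintro rfl; omega
      simp [u, this]
  have hS : {t | u t ∈ slice ch.e k}.Subsingleton := fun t ht t' ht' => by
    have h₁ := ht i₀ hfix
    have h₂ := ht' i₀ hfix
    simp only [u, Function.update_self] at h₁ h₂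
    linarith
  obtain ⟨t, htU, htCS⟩ := ((infinite_of_mem_nhds 0 hU).sdiff (hC.finite.union hS.finite)).nonempty
  refine ⟨u t, htU, fun j hj => ?_, fun h => htCS (Or.inl h), fun h => htCS (Or.inr h)⟩
  have : j ≠ i₀ := by rintro rfl; simp at hj; omega
  simp [u, this, hc j (by simp at hj ⊢; omega)]

variable {C' : Set (Fin n → ℝ)} {ch : Chart n k C'}

lemma HasPlanePoint.graph (h : ch.HasPlanePoint) {f : (Fin n → ℝ) → ℝ} (hf : ContinuousOn f C') :
    (ch.graph f hf).HasPlanePoint := by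
  have hS (x : Fin (n + 1) → ℝ) (hx : x ∈ slice (ch.graph f hf).e k) :
      Fin.init x ∈ slice ch.e k := by
    rw [← Fin.snoc_init_self x] at hx
    exact ((snoc_mem_slice_insertLast_last ch.le).mp hx).1
  rcases h with ⟨c, hc, hcU⟩ | ⟨c, hc, hnhds⟩
  · exact Or.inl ⟨Fin.snoc c 0, snoc_zero_mem_coordPlane hc,
      show Fin.init (Fin.snoc c 0 : Fin (n + 1) → ℝ) ∈ ch.U by simpa using hcU⟩
  · exact Or.inr ⟨Fin.snoc c 0, snoc_zero_mem_coordPlane hc,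
      compl_union_mem_nhds_snoc hnhds (fun x hx => hx.1) hS 0⟩

lemma HasPlanePoint.band (h : ch.HasPlanePoint) {lo hi : (Fin n → ℝ) → EReal}
    (hlo : ContinuousOn lo C') (hhi : ContinuousOn hi C') (hlt : ∀ x ∈ C', lo x < hi x) :
    (ch.band lo hi hlo hhi).HasPlanePoint := by
  have hS (x : Fin (n + 1) → ℝ) (hx : x ∈ slice (ch.band lo hi hlo hhi).e (k + 1)) :
      Fin.init x ∈ slice ch.e k := by
    rw [← Fin.snoc_init_self x] at hx
    exact (snoc_mem_slice_insertLast _).mp hx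
  rcases h with ⟨c, hc, hcU⟩ | ⟨c, hc, hnhds⟩
  · rcases ch.le.lt_or_eq with hk | rfl
    · obtain ⟨u, huU, hu, huC, huS⟩ := ch.exists_mem_coordPlane_succ hk hc hcU
      have hnhds : (C' ∪ slice ch.e k)ᶜ ∈ 𝓝 u :=
        mem_of_superset ((ch.isOpen_diff.inter (isClosed_slice _ _).isOpen_compl).mem_nhds
          ⟨⟨huU, huC⟩, huS⟩) fun x hx hxCS => hxCS.elim hx.1.2 hx.2
      exact Or.inr ⟨Fin.snoc u 0, snoc_zero_mem_coordPlane hu,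
        compl_union_mem_nhds_snoc hnhds (fun x hx => hx.1) hS 0⟩
    · obtain ⟨t, ht⟩ := EReal.lt_iff_exists_real_btwn.mp (hlt _ (ch.retract_mem hcU))
      exact Or.inl ⟨Fin.snoc c t, by simp [coordPlane_self],
        by simpa [Chart.band, bandSet] using ⟨hcU, ht⟩⟩
  · exact Or.inr ⟨Fin.snoc c 0, snoc_zero_mem_coordPlane (coordPlane_mono k.le_succ hc),
      compl_union_mem_nhds_snoc hnhds (fun x hx => hx.1) hS 0⟩

end Chart

lemma c1On_const {n : ℕ} (a : ℝ) (s : Set (Fin n → ℝ)) : C1On (fun _ => a) s :=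
  ⟨univ, isOpen_univ, subset_univ s, fun _ => a, contDiffOn_const, fun _ _ => rfl⟩

section C1Cell

variable {n k : ℕ} {C' : Set (Fin n → ℝ)}

lemma exists_isC1_hasPlanePoint_graph (h : ∃ ch : Chart n k C', ch.IsC1 ∧ ch.HasPlanePoint)
    {f : (Fin n → ℝ) → ℝ} (hf : ContinuousOn f C') (hf1 : C1On f C') :
    ∃ ch : Chart (n + 1) k {x | Fin.init x ∈ C' ∧ x (Fin.last n) = f (Fin.init x)},
      ch.IsC1 ∧ ch.HasPlanePoint :=
  let ⟨ch, hC1, hpt⟩ := h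
  ⟨ch.graph f hf, hC1.graph hf hf1, hpt.graph hf⟩

lemma exists_isC1_hasPlanePoint_band (h : ∃ ch : Chart n k C', ch.IsC1 ∧ ch.HasPlanePoint)
    {lo hi : (Fin n → ℝ) → EReal} (hlo : ContinuousOn lo C') (hhi : ContinuousOn hi C')
    (hlt : ∀ x ∈ C', lo x < hi x) :
    ∃ ch : Chart (n + 1) (k + 1) (bandSet C' lo hi), ch.IsC1 ∧ ch.HasPlanePoint :=
  let ⟨ch, hC1, hpt⟩ := h
  ⟨ch.band lo hi hlo hhi, hC1.band hlo hhi, hpt.band hlo hhi hlt⟩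

lemma exists_isC1_hasPlanePoint_univ : ∃ ch : Chart 0 0 univ, ch.IsC1 ∧ ch.HasPlanePoint :=
  ⟨_, Chart.isC1_ofIsOpen isOpen_univ, Chart.hasPlanePoint_ofIsOpen isOpen_univ univ_nonempty⟩

lemma nonempty_of_bandSet {lo hi : (Fin n → ℝ) → EReal} (h : (bandSet C' lo hi).Nonempty) :
    C'.Nonempty :=
  let ⟨_, hx⟩ := h
  ⟨_, hx.1⟩

end C1Cell

theorem IsC1Cell.exists_chart {S : RealStructure} {n k : ℕ} {C : Set (Fin n → ℝ)}
    (h : IsC1Cell S n k C) (hne : C.Nonempty) : ∃ ch : Chart n k C, ch.IsC1 ∧ ch.HasPlanePoint := by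
  induction h with
  | point a =>
    rw [point_eq_graph]
    exact exists_isC1_hasPlanePoint_graph exists_isC1_hasPlanePoint_univ continuousOn_const
      (c1On_const a _)
  | interval a b =>
    obtain ⟨x, hax, hxb⟩ := hne
    rw [interval_eq_bandSet]
    exact exists_isC1_hasPlanePoint_band exists_isC1_hasPlanePoint_univ continuousOn_const
      continuousOn_const fun _ _ => EReal.coe_lt_coe_iff.mpr (hax.trans hxb)
  | intervalLeft b =>
    rw [intervalLeft_eq_bandSet]
    exact exists_isC1_hasPlanePoint_band exists_isC1_hasPlanePoint_univ continuousOn_const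
      continuousOn_const fun _ _ => EReal.bot_lt_coe b
  | intervalRight a =>
    rw [intervalRight_eq_bandSet]
    exact exists_isC1_hasPlanePoint_band exists_isC1_hasPlanePoint_univ continuousOn_const
      continuousOn_const fun _ _ => EReal.coe_lt_top a
  | intervalAll =>
    rw [univ_eq_bandSet]
    exact exists_isC1_hasPlanePoint_band exists_isC1_hasPlanePoint_univ continuousOn_const
      continuousOn_const fun _ _ => bot_lt_top
  | graph f _ hf hf1 _ ih =>
    obtain ⟨x, hx⟩ := hne
    exact exists_isC1_hasPlanePoint_graph (ih ⟨_, hx.1⟩) hf hf1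
  | band f g _ hf hg _ _ _ _ hfg ih =>
    rw [← bandSet_coe_coe] at hne ⊢
    exact exists_isC1_hasPlanePoint_band (ih (nonempty_of_bandSet hne)) hf.coe_ereal
      hg.coe_ereal fun x hx => EReal.coe_lt_coe_iff.mpr (hfg x hx)
  | bandLeft g _ hg _ _ ih =>
    rw [← bandSet_bot_coe] at hne ⊢
    exact exists_isC1_hasPlanePoint_band (ih (nonempty_of_bandSet hne)) continuousOn_const
      hg.coe_ereal fun _ _ => EReal.bot_lt_coe _
  | bandRight f _ hf _ _ ih =>
    rw [← bandSet_coe_top] at hne ⊢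
    exact exists_isC1_hasPlanePoint_band (ih (nonempty_of_bandSet hne)) hf.coe_ereal
      continuousOn_const fun _ _ => EReal.coe_lt_top _
  | bandAll _ ih =>
    rw [← bandSet_bot_top] at hne ⊢
    exact exists_isC1_hasPlanePoint_band (ih (nonempty_of_bandSet hne)) continuousOn_const
      continuousOn_const fun _ _ => bot_lt_top

section LocalChart

variable {E : Type*} [NormedAddCommGroup E] [NormedSpace ℝ E]

structure IsSliceChartOn (C P U : Set E) (φ ψ : E → E) : Prop where
  isOpen : IsOpen U
  isOpen_image : IsOpen (φ '' U)
  contDiffOn : ContDiffOn ℝ 1 φ U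
  contDiffOn_inv : ContDiffOn ℝ 1 ψ (φ '' U)
  inv_apply : ∀ x ∈ U, ψ (φ x) = x
  mem_iff : ∀ x ∈ U, x ∈ C ↔ φ x ∈ P

namespace IsSliceChartOn

variable {C P U : Set E} {φ ψ : E → E}

lemma mono (h : IsSliceChartOn C P U φ ψ) {U' : Set E} (hU' : IsOpen U') (hsub : U' ⊆ U) :
    IsSliceChartOn C P U' φ ψ where
  isOpen := hU'
  isOpen_image := by
    have : φ '' U' = φ '' U ∩ ψ ⁻¹' U' := by
      ext y
      constructor
      · rintro ⟨x, hx, rfl⟩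
        exact ⟨mem_image_of_mem _ (hsub hx), by rwa [mem_preimage, h.inv_apply x (hsub hx)]⟩
      · rintro ⟨⟨x, hx, rfl⟩, hy⟩
        rw [mem_preimage, h.inv_apply x hx] at hy
        exact mem_image_of_mem _ hy
    rw [this]
    exact h.contDiffOn_inv.continuousOn.isOpen_inter_preimage h.isOpen_image hU'
  contDiffOn := h.contDiffOn.mono hsub
  contDiffOn_inv := h.contDiffOn_inv.mono (image_mono hsub)
  inv_apply x hx := h.inv_apply x (hsub hx)
  mem_iff x hx := h.mem_iff x (hsub hx)

lemma comp (h : IsSliceChartOn C P U φ ψ) {P' : Set E} {A B : E → E} (hA : ContDiff ℝ 1 A)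
    (hB : ContDiff ℝ 1 B) (hBA : Function.LeftInverse B A) (hAB : Function.RightInverse B A)
    (hP : ∀ y, A y ∈ P' ↔ y ∈ P) : IsSliceChartOn C P' U (A ∘ φ) (ψ ∘ B) where
  isOpen := h.isOpen
  isOpen_image := by
    rw [image_comp, image_eq_preimage_of_inverse hBA hAB]
    exact h.isOpen_image.preimage hB.continuous
  contDiffOn := hA.comp_contDiffOn h.contDiffOn
  contDiffOn_inv := h.contDiffOn_inv.comp hB.contDiffOn <| by
    rintro _ ⟨x, hx, rfl⟩
    simpa [hBA (φ x)] using mem_image_of_mem φ hx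
  inv_apply x hx := by simp [hBA (φ x), h.inv_apply x hx]
  mem_iff x hx := (h.mem_iff x hx).trans (hP _).symm

lemma union {U₁ U₂ : Set E} {φ₁ ψ₁ φ₂ ψ₂ : E → E} (h₁ : IsSliceChartOn C P U₁ φ₁ ψ₁)
    (h₂ : IsSliceChartOn C P U₂ φ₂ ψ₂) (hU : Disjoint U₁ U₂) (hV : Disjoint (φ₁ '' U₁) (φ₂ '' U₂)) :
    ∃ φ ψ, IsSliceChartOn C P (U₁ ∪ U₂) φ ψ ∧ φ '' (U₁ ∪ U₂) = φ₁ '' U₁ ∪ φ₂ '' U₂ := by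
  classical
  have hφ₁ : EqOn (U₁.piecewise φ₁ φ₂) φ₁ U₁ := piecewise_eqOn _ _ _
  have hφ₂ : EqOn (U₁.piecewise φ₁ φ₂) φ₂ U₂ := fun x hx =>
    piecewise_eq_of_notMem _ _ _ (hU.notMem_of_mem_right hx)
  have hψ₁ : EqOn ((φ₁ '' U₁).piecewise ψ₁ ψ₂) ψ₁ (φ₁ '' U₁) := piecewise_eqOn _ _ _
  have hψ₂ : EqOn ((φ₁ '' U₁).piecewise ψ₁ ψ₂) ψ₂ (φ₂ '' U₂) := fun y hy =>
    piecewise_eq_of_notMem _ _ _ (hV.notMem_of_mem_right hy)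
  have himage : U₁.piecewise φ₁ φ₂ '' (U₁ ∪ U₂) = φ₁ '' U₁ ∪ φ₂ '' U₂ := by
    rw [image_union, hφ₁.image_eq, hφ₂.image_eq]
  refine ⟨_, _, ⟨h₁.isOpen.union h₂.isOpen, himage ▸ h₁.isOpen_image.union h₂.isOpen_image,
    (h₁.contDiffOn.congr hφ₁).union_of_isOpen (h₂.contDiffOn.congr hφ₂) h₁.isOpen h₂.isOpen,
    himage ▸ (h₁.contDiffOn_inv.congr hψ₁).union_of_isOpen (h₂.contDiffOn_inv.congr hψ₂)
      h₁.isOpen_image h₂.isOpen_image, ?_, ?_⟩, himage⟩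
  · rintro x (hx | hx)
    · rw [hφ₁ hx, hψ₁ (mem_image_of_mem _ hx), h₁.inv_apply x hx]
    · rw [hφ₂ hx, hψ₂ (mem_image_of_mem _ hx), h₂.inv_apply x hx]
  · rintro x (hx | hx)
    · rw [hφ₁ hx, h₁.mem_iff x hx]
    · rw [hφ₂ hx, h₂.mem_iff x hx]

lemma exists_submanifold_chart (h : IsSliceChartOn C P U φ ψ) (hφ : MapsTo φ U U) {p : E}
    (hp : p ∈ U) :
    ∃ (U V : Set E) (φ ψ : E → E), IsOpen U ∧ p ∈ U ∧ IsOpen V ∧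
      ContDiffOn ℝ 1 φ U ∧ ContDiffOn ℝ 1 ψ V ∧ φ '' U = V ∧
      (∀ x ∈ U, ψ (φ x) = x) ∧ (∀ y ∈ V, φ (ψ y) ∈ U ∧ φ (ψ y) = y) ∧ φ '' (C ∩ U) = V ∩ P := by
  refine ⟨U, φ '' U, φ, ψ, h.isOpen, hp, h.isOpen_image, h.contDiffOn, h.contDiffOn_inv, rfl,
    h.inv_apply, ?_, ?_⟩
  · rintro _ ⟨x, hx, rfl⟩
    rw [h.inv_apply x hx]
    exact ⟨hφ hx, rfl⟩
  · ext y
    constructor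
    · rintro ⟨x, ⟨hxC, hxU⟩, rfl⟩
      exact ⟨mem_image_of_mem _ hxU, (h.mem_iff x hxU).mp hxC⟩
    · rintro ⟨⟨x, hxU, rfl⟩, hP⟩
      exact ⟨x, ⟨(h.mem_iff x hxU).mpr hP, hxU⟩, rfl⟩

end IsSliceChartOn

lemma isSliceChartOn_id {C P U : Set E} (hU : IsOpen U) (h : ∀ x ∈ U, x ∉ C ∧ x ∉ P) :
    IsSliceChartOn C P U id id where
  isOpen := hU
  isOpen_image := by rwa [image_id]
  contDiffOn := contDiffOn_id
  contDiffOn_inv := contDiffOn_id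
  inv_apply _ _ := rfl
  mem_iff x hx := iff_of_false (h x hx).1 (h x hx).2

end LocalChart


section Contraction

variable {n k : ℕ} (e : Fin n ≃ Fin n) (c : Fin n → ℝ) (ε : ℝ)

def contraction (v : Fin n → ℝ) : Fin n → ℝ := fun j => c j + ε * v (e.symm j)

def contractionInv (y : Fin n → ℝ) : Fin n → ℝ := fun i => (y (e i) - c (e i)) / ε

variable {ε}

lemma leftInverse_contractionInv (hε : ε ≠ 0) :
    Function.LeftInverse (contractionInv e c ε) (contraction e c ε) := fun v => by
  funext i
  simp [contraction, contractionInv, hε]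

lemma rightInverse_contractionInv (hε : ε ≠ 0) :
    Function.RightInverse (contractionInv e c ε) (contraction e c ε) := fun y => by
  funext j
  simp [contraction, contractionInv, mul_div_cancel₀ _ hε]

variable (ε)

lemma contDiff_contraction : ContDiff ℝ 1 (contraction e c ε) :=
  contDiff_pi.mpr fun _ => contDiff_const.add (contDiff_const.mul (contDiff_apply ℝ ℝ _))

lemma contDiff_contractionInv : ContDiff ℝ 1 (contractionInv e c ε) :=
  contDiff_pi.mpr fun _ => ((contDiff_apply ℝ ℝ _).sub contDiff_const).div_const ε

variable {ε}

lemma dist_contraction_le (hε : 0 ≤ ε) (v : Fin n → ℝ) : dist (contraction e c ε v) c ≤ ε * ‖v‖ :=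
  (dist_pi_le_iff (by positivity)).mpr fun j => by
    simpa [contraction, Real.dist_eq, abs_mul, abs_of_nonneg hε] using
      mul_le_mul_of_nonneg_left (norm_le_pi_norm v (e.symm j)) hε

lemma contraction_mem_coordPlane_iff (hc : c ∈ coordPlane n k) (hε : ε ≠ 0) (v : Fin n → ℝ) :
    contraction e c ε v ∈ coordPlane n k ↔ v ∈ slice e k := by
  refine ⟨fun h i hi => ?_, fun h j hj => ?_⟩
  · simpa [contraction, hc (e i) hi, hε] using h (e i) hi
  · simp [contraction, hc j hj, h (e.symm j) (by simpa using hj)]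

end Contraction

namespace IsSliceChartOn

variable {n k : ℕ} {e : Fin n ≃ Fin n} {C U : Set (Fin n → ℝ)} {φ ψ : (Fin n → ℝ) → Fin n → ℝ}

/-- Compose with a small contraction towards `c`. -/
lemma exists_mapsTo (h : IsSliceChartOn C (slice e k) U φ ψ) (hb : Bornology.IsBounded (φ '' U))
    {c : Fin n → ℝ} (hc : c ∈ coordPlane n k) {r : ℝ} (hr : 0 < r) (hcU : ball c r ⊆ U) :
    ∃ φ' ψ', IsSliceChartOn C (coordPlane n k) U φ' ψ' ∧ MapsTo φ' U U := by
  obtain ⟨M, hM, hφM⟩ := hb.subset_closedBall_lt 0 0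
  set ε := r / (2 * M) with hε_def
  have hε : 0 < ε := by positivity
  refine ⟨_, _, h.comp (contDiff_contraction e c ε) (contDiff_contractionInv e c ε)
    (leftInverse_contractionInv e c hε.ne') (rightInverse_contractionInv e c hε.ne')
    (contraction_mem_coordPlane_iff e c hc hε.ne'), fun x hx => hcU ?_⟩
  have hφx : ‖φ x‖ ≤ M := by simpa using hφM (mem_image_of_mem φ hx)
  calc dist (contraction e c ε (φ x)) c ≤ ε * ‖φ x‖ := dist_contraction_le e c hε.le _
    _ ≤ ε * M := by gcongr
    _ = r / 2 := by rw [hε_def]; field_simp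
    _ < r := by linarith

end IsSliceChartOn

namespace Chart

variable {n k : ℕ} {C : Set (Fin n → ℝ)} {ch : Chart n k C}

lemma IsC1.isSliceChartOn (h : ch.IsC1) : IsSliceChartOn C (slice ch.e k) ch.U ch.Φ ch.Ψ where
  isOpen := ch.isOpen_U
  isOpen_image := by rw [ch.image_Φ]; exact ch.isOpen_U
  contDiffOn := h.1
  contDiffOn_inv := by rw [ch.image_Φ]; exact h.2
  inv_apply := ch.Ψ_Φ
  mem_iff := ch.mem_iff

lemma IsC1.exists_local_chart_of_mem_U (h : ch.IsC1) {p c : Fin n → ℝ} (hp : p ∈ C)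
    (hc : c ∈ coordPlane n k) (hcU : c ∈ ch.U) :
    ∃ U φ ψ, IsSliceChartOn C (coordPlane n k) U φ ψ ∧ MapsTo φ U U ∧ p ∈ U := by
  obtain ⟨τ, hτ, hτU⟩ := nhds_basis_closedBall.mem_iff.mp (ch.isOpen_U.mem_nhds (ch.subset_U hp))
  obtain ⟨r, hr, hrU⟩ := nhds_basis_closedBall.mem_iff.mp (ch.isOpen_U.mem_nhds hcU)
  have hsub : ball p τ ∪ ball c r ⊆ closedBall p τ ∪ closedBall c r :=
    union_subset_union ball_subset_closedBall ball_subset_closedBall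
  have hb : Bornology.IsBounded (ch.Φ '' (ball p τ ∪ ball c r)) :=
    (((isCompact_closedBall p τ).union (isCompact_closedBall c r)).image_of_continuousOn
      (ch.continuousOn_Φ.mono (union_subset hτU hrU))).isBounded.subset (image_mono hsub)
  obtain ⟨φ, ψ, hφ, hmaps⟩ := (h.isSliceChartOn.mono (isOpen_ball.union isOpen_ball)
    (hsub.trans (union_subset hτU hrU))).exists_mapsTo hb hc hr subset_union_right
  exact ⟨_, φ, ψ, hφ, hmaps, Or.inl (mem_ball_self hτ)⟩

/-- The identity on a small ball around `c`, glued to `Φ` near `p`. -/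
lemma IsC1.exists_local_chart_of_nhds (h : ch.IsC1) {p c : Fin n → ℝ} (hp : p ∈ C)
    (hc : c ∈ coordPlane n k) (hnhds : (C ∪ slice ch.e k)ᶜ ∈ 𝓝 c) :
    ∃ U φ ψ, IsSliceChartOn C (coordPlane n k) U φ ψ ∧ MapsTo φ U U ∧ p ∈ U := by
  have hpU := ch.subset_U hp
  have hcC : c ∉ C ∪ slice ch.e k := mem_of_mem_nhds hnhds
  obtain ⟨ρ, hρ, hρp, hρΦ⟩ : ∃ ρ > 0, ρ + ρ ≤ dist p c ∧ ρ + ρ ≤ dist (ch.Φ p) c :=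
    ⟨min (dist p c) (dist (ch.Φ p) c) / 2,
      half_pos (lt_min (dist_pos.mpr fun h => hcC (Or.inl (h ▸ hp)))
        (dist_pos.mpr fun h => hcC (Or.inr (h ▸ (ch.mem_iff p hpU).mp hp)))),
      by linarith [min_le_left (dist p c) (dist (ch.Φ p) c)],
      by linarith [min_le_right (dist p c) (dist (ch.Φ p) c)]⟩
  obtain ⟨τ, hτ, hτU⟩ := Metric.mem_nhds_iff.mp (inter_mem (ch.isOpen_U.mem_nhds hpU)
    (inter_mem ((ch.continuousOn_Φ.continuousAt (ch.isOpen_U.mem_nhds hpU)).preimage_mem_nhds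
      (ball_mem_nhds _ hρ)) (ball_mem_nhds p hρ)))
  obtain ⟨δ, hδ, hδC⟩ := Metric.mem_nhds_iff.mp (inter_mem hnhds (ball_mem_nhds c hρ))
  have hΦτ : ch.Φ '' ball p τ ⊆ ball (ch.Φ p) ρ := image_subset_iff.mpr fun x hx => (hτU hx).2.1
  have h₁ := h.isSliceChartOn.mono isOpen_ball fun x hx => (hτU hx).1
  have h₂ : IsSliceChartOn C (slice ch.e k) (ball c δ) id id :=
    isSliceChartOn_id isOpen_ball fun x hx => not_or.mp (hδC hx).1
  obtain ⟨φ, ψ, hφψ, himage⟩ := h₁.union h₂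
    ((ball_disjoint_ball hρp).mono (fun x hx => (hτU hx).2.2) fun x hx => (hδC hx).2)
    (by rw [image_id]; exact (ball_disjoint_ball hρΦ).mono hΦτ fun x hx => (hδC hx).2)
  have hb : Bornology.IsBounded (φ '' (ball p τ ∪ ball c δ)) := by
    rw [himage, image_id]
    exact (isBounded_ball.subset hΦτ).union isBounded_ball
  obtain ⟨φ', ψ', hφψ', hmaps⟩ := hφψ.exists_mapsTo hb hc hδ subset_union_right
  exact ⟨_, φ', ψ', hφψ', hmaps, Or.inl (mem_ball_self hτ)⟩

end Chart

end CellSubmanifold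

open CellSubmanifold

/-- a `k`-dimensional cell in `ℝⁿ` is a topological submanifold of `ℝⁿ` of
dimension `k` (every point has an ambient open neighborhood `U` with `C ∩ U` homeomorphic
to an open subset of `ℝᵏ`); moreover, a `k`-dimensional C¹ cell is a C¹ submanifold of
dimension `k` (every point admits a local C¹ chart of `ℝⁿ` straightening `C` to a
`k`-dimensional coordinate slice). -/
theorem cell_is_submanifold (S : RealStructure) {n k : ℕ} (C : Set (Fin n → ℝ)) :
    (IsCell S n k C → ∀ p ∈ C, ∃ U : Set (Fin n → ℝ), IsOpen U ∧ p ∈ U ∧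
      ∃ V : Set (Fin k → ℝ), IsOpen V ∧ Nonempty (↥(C ∩ U) ≃ₜ ↥V)) ∧
    (IsC1Cell S n k C → ∀ p ∈ C, ∃ (U V : Set (Fin n → ℝ))
      (φ ψ : (Fin n → ℝ) → (Fin n → ℝ)), IsOpen U ∧ p ∈ U ∧ IsOpen V ∧
      ContDiffOn ℝ 1 φ U ∧ ContDiffOn ℝ 1 ψ V ∧ φ '' U = V ∧
      (∀ x ∈ U, ψ (φ x) = x) ∧ (∀ y ∈ V, φ (ψ y) ∈ U ∧ φ (ψ y) = y) ∧
      φ '' (C ∩ U) = V ∩ {y | ∀ i : Fin n, k ≤ (i : ℕ) → y i = 0}) := by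
  refine ⟨fun hC p hp => ?_, fun hC p hp => ?_⟩
  · obtain ⟨ch⟩ := hC.nonempty_chart
    exact ⟨univ, isOpen_univ, mem_univ p, _, ch.isOpen_preimage_sliceEmbed,
      ⟨(Homeomorph.setCongr (inter_univ C)).trans ch.homeomorph⟩⟩
  · obtain ⟨ch, hC1, hpt⟩ := hC.exists_chart ⟨p, hp⟩
    obtain ⟨U, φ, ψ, hφψ, hmaps, hpU⟩ := hpt.elim
      (fun ⟨c, hc, hcU⟩ => hC1.exists_local_chart_of_mem_U hp hc hcU)
      fun ⟨c, hc, hnhds⟩ => hC1.exists_local_chart_of_nhds hp hc hnhds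
    exact hφψ.exists_submanifold_chart hmaps hpU
end
end
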